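/- arXiv:2511.01922 — 8 statements merged into one kernel-verified Lean document; each statement's English description precedes it below -/
import Mathlib

section
/- Let a > 1, b ∈ ℝ and h > 0, and set f(x) = x³/3 + b·x. Then the sum of oriented integrals ∫_{-√(2h)}^{√(2h)} f(a-1-√(2h+(a-1)²-y²)) dy + ∫_{√(2h)}^{√(2h+(a+1)²)} f(a+1-√(2h+(a+1)²-y²)) dy + ∫_{√(2h+(a+1)²)}^{-√(2h+(a+1)²)} f(a+1+√(2h+(a+1)²-y²)) dy + ∫_{-√(2h+(a+1)²)}^{-√(2h)} f(a+1-√(2h+(a+1)²-y²)) dy equals M(h) := -(π/4)(a+1)²(5a²+10a+4b+5) - (15a²+4b+5)√h/√2 - (3a²+6a+2b+3)πh - (13√2/3)h^{3/2} - πh² - (1/4)(a²-2a+2h+1)(5a²-10a+4b+2h+5)·arctan(√(2h)/(a-1)) + (1/4)(a²+2a+2h+1)(5a²+10a+4b+2h+5)·arctan(√(2h)/(a+1)). -/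
/-- The Melnikov function `M(h; a, b)` of the discontinuous SD oscillator. -/
noncomputable def Mel (a b h : ℝ) : ℝ :=
  -(Real.pi / 4) * (a + 1) ^ 2 * (5 * a ^ 2 + 10 * a + 4 * b + 5)
    - (15 * a ^ 2 + 4 * b + 5) * Real.sqrt h / Real.sqrt 2
    - (3 * a ^ 2 + 6 * a + 2 * b + 3) * Real.pi * h
    - (13 * Real.sqrt 2 / 3) * (h * Real.sqrt h)
    - Real.pi * h ^ 2
    - (1 / 4) * (a ^ 2 - 2 * a + 2 * h + 1) * (5 * a ^ 2 - 10 * a + 4 * b + 2 * h + 5)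
        * Real.arctan (Real.sqrt (2 * h) / (a - 1))
    + (1 / 4) * (a ^ 2 + 2 * a + 2 * h + 1) * (5 * a ^ 2 + 10 * a + 4 * b + 2 * h + 5)
        * Real.arctan (Real.sqrt (2 * h) / (a + 1))

/-!
Each integrand is `f (c ± s)` with `f x = x³/3 + b x` and `s = √(ρ - y²)`. Using `s² = ρ - y²`
it becomes a polynomial in `y` plus `±(c² + b + (ρ - y²)/3) s`, and `s`, `y² s` have the classical
primitives `(y s + ρ arcsin (y/√ρ))/2` and `(y (2y² - ρ) s + ρ² arcsin (y/√ρ))/8`. All these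
primitives are odd in `y`, so the four pieces collapse to values at `y = √(2h)`, where `s = a ∓ 1`
and `arcsin (y/√ρ) = arctan (√(2h)/(a ∓ 1))`, and at the turning point `y = √ρ`, where the
arcsine is `π/2`.
-/

open Real Set

theorem hasDerivAt_sqrt_sub_sq {ρ y : ℝ} (hy : y ^ 2 < ρ) :
    HasDerivAt (fun t => √(ρ - t ^ 2)) (-y / √(ρ - y ^ 2)) y := by
  convert ((hasDerivAt_pow 2 y).const_sub ρ).sqrt (sub_pos.2 hy).ne' using 1
  field_simp
  ring

theorem hasDerivAt_arcsin_div_sqrt {ρ y : ℝ} (hy : y ^ 2 < ρ) :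
    HasDerivAt (fun t => arcsin (t / √ρ)) (1 / √(ρ - y ^ 2)) y := by
  obtain ⟨hl, hu⟩ := Real.sq_lt.1 hy
  have hρ : 0 < ρ := (sq_nonneg y).trans_lt hy
  have hρ' : 0 < √ρ := sqrt_pos.2 hρ
  have hd := (hasDerivAt_arcsin (x := y / √ρ) (by rw [ne_eq, div_eq_iff hρ'.ne']; linarith)
    (by rw [ne_eq, div_eq_iff hρ'.ne']; linarith)).comp y ((hasDerivAt_id y).div_const √ρ)
  have h_one_sub : 1 - (y / √ρ) ^ 2 = (ρ - y ^ 2) / ρ := by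
    rw [div_pow, sq_sqrt hρ.le]; field_simp
  rw [h_one_sub, sqrt_div' _ hρ.le] at hd
  refine hd.congr_deriv ?_
  field_simp

noncomputable def circleAreaPrimitive (ρ y : ℝ) : ℝ :=
  (y * √(ρ - y ^ 2) + ρ * arcsin (y / √ρ)) / 2

noncomputable def circleMomentPrimitive (ρ y : ℝ) : ℝ :=
  (y * (2 * y ^ 2 - ρ) * √(ρ - y ^ 2) + ρ ^ 2 * arcsin (y / √ρ)) / 8

theorem hasDerivAt_circleAreaPrimitive {ρ y : ℝ} (hy : y ^ 2 < ρ) :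
    HasDerivAt (circleAreaPrimitive ρ) (√(ρ - y ^ 2)) y := by
  have hs : 0 < √(ρ - y ^ 2) := sqrt_pos.2 (sub_pos.2 hy)
  have hs2 : √(ρ - y ^ 2) ^ 2 = ρ - y ^ 2 := sq_sqrt (sub_pos.2 hy).le
  refine ((((hasDerivAt_id' y).mul (hasDerivAt_sqrt_sub_sq hy)).add
    ((hasDerivAt_arcsin_div_sqrt hy).const_mul ρ)).div_const 2).congr_deriv ?_
  field_simp
  linear_combination -hs2

theorem hasDerivAt_circleMomentPrimitive {ρ y : ℝ} (hy : y ^ 2 < ρ) :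
    HasDerivAt (circleMomentPrimitive ρ) (y ^ 2 * √(ρ - y ^ 2)) y := by
  have hs : 0 < √(ρ - y ^ 2) := sqrt_pos.2 (sub_pos.2 hy)
  have hs2 : √(ρ - y ^ 2) ^ 2 = ρ - y ^ 2 := sq_sqrt (sub_pos.2 hy).le
  have hcubic : HasDerivAt (fun t => t * (2 * t ^ 2 - ρ)) (6 * y ^ 2 - ρ) y := by
    refine ((hasDerivAt_id' y).mul (((hasDerivAt_pow 2 y).const_mul 2).sub_const ρ)).congr_deriv ?_
    ring
  refine (((hcubic.mul (hasDerivAt_sqrt_sub_sq hy)).add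
    ((hasDerivAt_arcsin_div_sqrt hy).const_mul (ρ ^ 2))).div_const 8).congr_deriv ?_
  field_simp
  linear_combination -(2 * y ^ 2 + ρ) * hs2

noncomputable def cubicPrimitive (c b ρ ε y : ℝ) : ℝ :=
  (c ^ 3 / 3 + b * c + c * ρ) * y - c * y ^ 3 / 3
    + ε * ((c ^ 2 + b + ρ / 3) * circleAreaPrimitive ρ y - circleMomentPrimitive ρ y / 3)

theorem hasDerivAt_cubicPrimitive {c b ρ ε y : ℝ} (hε : ε ^ 2 = 1) (hy : y ^ 2 < ρ) :
    HasDerivAt (cubicPrimitive c b ρ ε)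
      ((c + ε * √(ρ - y ^ 2)) ^ 3 / 3 + b * (c + ε * √(ρ - y ^ 2))) y := by
  have hs2 : √(ρ - y ^ 2) ^ 2 = ρ - y ^ 2 := sq_sqrt (sub_pos.2 hy).le
  have hpoly : HasDerivAt (fun t => (c ^ 3 / 3 + b * c + c * ρ) * t - c * t ^ 3 / 3)
      (c ^ 3 / 3 + b * c + c * ρ - c * y ^ 2) y := by
    refine (((hasDerivAt_id y).const_mul _).sub
      (((hasDerivAt_pow 3 y).const_mul c).div_const 3)).congr_deriv ?_
    ring
  refine (hpoly.add ((((hasDerivAt_circleAreaPrimitive hy).const_mul (c ^ 2 + b + ρ / 3)).sub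
    ((hasDerivAt_circleMomentPrimitive hy).div_const 3)).const_mul ε)).congr_deriv ?_
  linear_combination -(c * √(ρ - y ^ 2) ^ 2 + ε * √(ρ - y ^ 2) ^ 3 / 3) * hε
    - (c + ε * √(ρ - y ^ 2) / 3) * hs2

theorem continuous_cubicPrimitive (c b ρ ε : ℝ) : Continuous (cubicPrimitive c b ρ ε) := by
  unfold cubicPrimitive circleAreaPrimitive circleMomentPrimitive
  fun_prop

theorem cubicPrimitive_neg (c b ρ ε y : ℝ) :
    cubicPrimitive c b ρ ε (-y) = -cubicPrimitive c b ρ ε y := by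
  simp only [cubicPrimitive, circleAreaPrimitive, circleMomentPrimitive, neg_sq, neg_div,
    arcsin_neg]
  ring

theorem integral_cubic_add_sign_mul_sqrt {c b ρ ε l u : ℝ} (hε : ε ^ 2 = 1)
    (hl : l ^ 2 ≤ ρ) (hu : u ^ 2 ≤ ρ) :
    ∫ y in l..u, (c + ε * √(ρ - y ^ 2)) ^ 3 / 3 + b * (c + ε * √(ρ - y ^ 2))
      = cubicPrimitive c b ρ ε u - cubicPrimitive c b ρ ε l := by
  wlog hlu : l ≤ u generalizing l u
  · rw [intervalIntegral.integral_symm, this hu hl (le_of_not_ge hlu), neg_sub]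
  have hl' := abs_le.1 (abs_le_sqrt hl)
  have hu' := abs_le.1 (abs_le_sqrt hu)
  refine intervalIntegral.integral_eq_sub_of_hasDerivAt_of_le hlu
    (continuous_cubicPrimitive c b ρ ε).continuousOn (fun y hy => ?_)
    (Continuous.intervalIntegrable (by fun_prop) l u)
  exact hasDerivAt_cubicPrimitive hε (Real.sq_lt.2 ⟨hl'.1.trans_lt hy.1, hy.2.trans_le hu'.2⟩)

theorem integral_cubic_add_sqrt {c b ρ l u : ℝ} (hl : l ^ 2 ≤ ρ) (hu : u ^ 2 ≤ ρ) :
    ∫ y in l..u, (c + √(ρ - y ^ 2)) ^ 3 / 3 + b * (c + √(ρ - y ^ 2))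
      = cubicPrimitive c b ρ 1 u - cubicPrimitive c b ρ 1 l := by
  simpa using integral_cubic_add_sign_mul_sqrt (c := c) (b := b) (one_pow 2) hl hu

theorem integral_cubic_sub_sqrt {c b ρ l u : ℝ} (hl : l ^ 2 ≤ ρ) (hu : u ^ 2 ≤ ρ) :
    ∫ y in l..u, (c - √(ρ - y ^ 2)) ^ 3 / 3 + b * (c - √(ρ - y ^ 2))
      = cubicPrimitive c b ρ (-1) u - cubicPrimitive c b ρ (-1) l := by
  simpa [← sub_eq_add_neg] using
    integral_cubic_add_sign_mul_sqrt (c := c) (b := b) (by norm_num : (-1 : ℝ) ^ 2 = 1) hl hu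

theorem circleAreaPrimitive_sqrt {ρ : ℝ} (hρ : 0 < ρ) : circleAreaPrimitive ρ √ρ = π * ρ / 4 := by
  rw [circleAreaPrimitive, sq_sqrt hρ.le, sub_self, sqrt_zero,
    div_self (sqrt_pos.2 hρ).ne', arcsin_one]
  ring

theorem circleMomentPrimitive_sqrt {ρ : ℝ} (hρ : 0 < ρ) :
    circleMomentPrimitive ρ √ρ = π * ρ ^ 2 / 16 := by
  rw [circleMomentPrimitive, sq_sqrt hρ.le, sub_self, sqrt_zero,
    div_self (sqrt_pos.2 hρ).ne', arcsin_one]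
  ring

theorem arcsin_div_sqrt_sq_add_sq (r : ℝ) {d : ℝ} (hd : 0 < d) :
    arcsin (r / √(r ^ 2 + d ^ 2)) = arctan (r / d) := by
  have h_one_add : 1 + (r / d) ^ 2 = (r ^ 2 + d ^ 2) / d ^ 2 := by field_simp; ring
  rw [arctan_eq_arcsin, h_one_add, sqrt_div' _ (sq_nonneg d), sqrt_sq hd.le]
  have : 0 < √(r ^ 2 + d ^ 2) := sqrt_pos.2 (by positivity)
  field_simp

theorem circleAreaPrimitive_sq_add_sq (r : ℝ) {d : ℝ} (hd : 0 < d) :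
    circleAreaPrimitive (r ^ 2 + d ^ 2) r = (r * d + (r ^ 2 + d ^ 2) * arctan (r / d)) / 2 := by
  rw [circleAreaPrimitive, add_sub_cancel_left, sqrt_sq hd.le, arcsin_div_sqrt_sq_add_sq r hd]

theorem circleMomentPrimitive_sq_add_sq (r : ℝ) {d : ℝ} (hd : 0 < d) :
    circleMomentPrimitive (r ^ 2 + d ^ 2) r
      = (r * (r ^ 2 - d ^ 2) * d + (r ^ 2 + d ^ 2) ^ 2 * arctan (r / d)) / 8 := by
  rw [circleMomentPrimitive, add_sub_cancel_left, sqrt_sq hd.le, arcsin_div_sqrt_sq_add_sq r hd]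
  ring

open Real in
/-- The sum of the four oriented integrals along the pieces of the closed level orbit
equals the Melnikov function `M(h)`. -/
theorem melnikov_integral_formula (a b h : ℝ) (ha : 1 < a) (hh : 0 < h) :
    (∫ y in (-Real.sqrt (2 * h))..(Real.sqrt (2 * h)),
        ((a - 1 - Real.sqrt (2 * h + (a - 1) ^ 2 - y ^ 2)) ^ 3 / 3
          + b * (a - 1 - Real.sqrt (2 * h + (a - 1) ^ 2 - y ^ 2))))
      + (∫ y in (Real.sqrt (2 * h))..(Real.sqrt (2 * h + (a + 1) ^ 2)),
          ((a + 1 - Real.sqrt (2 * h + (a + 1) ^ 2 - y ^ 2)) ^ 3 / 3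
            + b * (a + 1 - Real.sqrt (2 * h + (a + 1) ^ 2 - y ^ 2))))
      + (∫ y in (Real.sqrt (2 * h + (a + 1) ^ 2))..(-Real.sqrt (2 * h + (a + 1) ^ 2)),
          ((a + 1 + Real.sqrt (2 * h + (a + 1) ^ 2 - y ^ 2)) ^ 3 / 3
            + b * (a + 1 + Real.sqrt (2 * h + (a + 1) ^ 2 - y ^ 2))))
      + (∫ y in (-Real.sqrt (2 * h + (a + 1) ^ 2))..(-Real.sqrt (2 * h)),
          ((a + 1 - Real.sqrt (2 * h + (a + 1) ^ 2 - y ^ 2)) ^ 3 / 3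
            + b * (a + 1 - Real.sqrt (2 * h + (a + 1) ^ 2 - y ^ 2))))
      = Mel a b h := by
  set r := √(2 * h) with hr
  have hr2 : r ^ 2 = 2 * h := sq_sqrt (by positivity)
  have hρ₂ : 0 < r ^ 2 + (a + 1) ^ 2 := by positivity
  have hr₁ : r ^ 2 ≤ r ^ 2 + (a - 1) ^ 2 := le_add_of_nonneg_right (sq_nonneg _)
  have hr₂ : r ^ 2 ≤ r ^ 2 + (a + 1) ^ 2 := le_add_of_nonneg_right (sq_nonneg _)
  have hR₂ : √(r ^ 2 + (a + 1) ^ 2) ^ 2 ≤ r ^ 2 + (a + 1) ^ 2 := (sq_sqrt hρ₂.le).le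
  rw [← hr2, integral_cubic_sub_sqrt ((neg_sq r).trans_le hr₁) hr₁,
    integral_cubic_sub_sqrt hr₂ hR₂, integral_cubic_add_sqrt hR₂ ((neg_sq _).trans_le hR₂),
    integral_cubic_sub_sqrt ((neg_sq _).trans_le hR₂) ((neg_sq r).trans_le hr₂)]
  simp only [cubicPrimitive_neg]
  simp only [cubicPrimitive]
  rw [circleAreaPrimitive_sqrt hρ₂, circleMomentPrimitive_sqrt hρ₂,
    circleAreaPrimitive_sq_add_sq r (by linarith : 0 < a - 1),
    circleMomentPrimitive_sq_add_sq r (by linarith : 0 < a - 1),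
    circleAreaPrimitive_sq_add_sq r (by linarith : 0 < a + 1),
    circleMomentPrimitive_sq_add_sq r (by linarith : 0 < a + 1)]
  have h_sqrt_h : √h = r / √2 := by
    rw [hr, sqrt_mul zero_le_two, mul_div_cancel_left₀ _ (by positivity)]
  have h_sqrt_two : √2 ^ 2 = 2 := sq_sqrt zero_le_two
  rw [Mel, h_sqrt_h, ← hr, show h = r ^ 2 / 2 by linarith]
  field_simp
  rw [h_sqrt_two]
  ring
end

section
/- For a > 1 and b ∈ ℝ, the Melnikov function M is differentiable on (0,∞) and its derivative M′(h) tends to -(3(a+1)² + 2b)·π as h → 0⁺; moreover M(h) tends to -(π/4)(a+1)²(5(a+1)² + 4b) as h → 0⁺. -/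
open Real

lemma hasDerivAt_arctan_sqrt_two_mul_div (c : ℝ) {x : ℝ} (hx : 0 < x) :
    HasDerivAt (fun x => arctan (√(2 * x) / c)) (c / ((c ^ 2 + 2 * x) * √(2 * x))) x := by
  rcases eq_or_ne c 0 with rfl | hc
  · simpa using hasDerivAt_const x (0 : ℝ)
  have hsq : √(2 * x) ^ 2 = 2 * x := sq_sqrt (by positivity)
  have H := ((((hasDerivAt_id x).const_mul 2).sqrt (by positivity)).div_const c).arctan
  refine H.congr_deriv ?_
  simp only [id]
  field_simp
  rw [hsq]

/-- Both arctan terms of `Mel` have this form, with `c = a ∓ 1` and `k = 5c² + 4b`. -/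
noncomputable def arctanTerm (c k x : ℝ) : ℝ :=
  (c ^ 2 + 2 * x) * (k + 2 * x) * arctan (√(2 * x) / c)

lemma hasDerivAt_arctanTerm (c k : ℝ) {x : ℝ} (hx : 0 < x) :
    HasDerivAt (arctanTerm c k)
      (2 * (c ^ 2 + k + 4 * x) * arctan (√(2 * x) / c) + c * (k + 2 * x) / √(2 * x)) x := by
  have hP : HasDerivAt (fun x => c ^ 2 + 2 * x) 2 x := by
    simpa using ((hasDerivAt_id x).const_mul 2).const_add (c ^ 2)
  have hQ : HasDerivAt (fun x => k + 2 * x) 2 x := by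
    simpa using ((hasDerivAt_id x).const_mul 2).const_add k
  refine ((hP.mul hQ).mul (hasDerivAt_arctan_sqrt_two_mul_div c hx)).congr_deriv ?_
  have : c ^ 2 + 2 * x ≠ 0 := by positivity
  simp only [Pi.mul_apply]
  field_simp
  ring

lemma hasDerivAt_mul_sqrt {x : ℝ} (hx : 0 < x) :
    HasDerivAt (fun x => x * √x) (3 / 2 * √x) x := by
  refine ((hasDerivAt_id x).mul (hasDerivAt_sqrt hx.ne')).congr_deriv ?_
  have := sqrt_pos.2 hx
  field_simp
  rw [id, sq_sqrt hx.le]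
  ring

lemma mel_eq_arctanTerm (a b : ℝ) : Mel a b = fun h =>
    -(π / 4) * (a + 1) ^ 2 * (5 * a ^ 2 + 10 * a + 4 * b + 5)
      - (15 * a ^ 2 + 4 * b + 5) * √h / √2 - (3 * a ^ 2 + 6 * a + 2 * b + 3) * π * h
      - 13 * √2 / 3 * (h * √h) - π * h ^ 2
      - arctanTerm (a - 1) (5 * (a - 1) ^ 2 + 4 * b) h / 4
      + arctanTerm (a + 1) (5 * (a + 1) ^ 2 + 4 * b) h / 4 := by
  funext h
  unfold Mel arctanTerm
  ring

noncomputable def melDeriv (a b h : ℝ) : ℝ :=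
  -6 * √(2 * h) - (3 * a ^ 2 + 6 * a + 2 * b + 3) * π - 2 * π * h
    - (3 * (a - 1) ^ 2 + 2 * b + 2 * h) * arctan (√(2 * h) / (a - 1))
    + (3 * (a + 1) ^ 2 + 2 * b + 2 * h) * arctan (√(2 * h) / (a + 1))

lemma hasDerivAt_mel (a b : ℝ) {h : ℝ} (hh : 0 < h) :
    HasDerivAt (Mel a b) (melDeriv a b h) h := by
  rw [mel_eq_arctanTerm]
  refine (((((((hasDerivAt_const h _).sub
    (((hasDerivAt_sqrt hh.ne').const_mul (15 * a ^ 2 + 4 * b + 5)).div_const √2)).sub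
    ((hasDerivAt_id h).const_mul ((3 * a ^ 2 + 6 * a + 2 * b + 3) * π))).sub
    ((hasDerivAt_mul_sqrt hh).const_mul (13 * √2 / 3))).sub
    ((hasDerivAt_pow 2 h).const_mul π)).sub
    ((hasDerivAt_arctanTerm (a - 1) (5 * (a - 1) ^ 2 + 4 * b) hh).div_const 4)).add
    ((hasDerivAt_arctanTerm (a + 1) (5 * (a + 1) ^ 2 + 4 * b) hh).div_const 4)).congr_deriv ?_
  have hr2 : √h ^ 2 = h := sq_sqrt hh.le
  have hs2 : √2 ^ 2 = 2 := sq_sqrt (by norm_num)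
  unfold melDeriv
  rw [sqrt_mul zero_le_two]
  field_simp
  ring_nf
  simp only [hr2, hs2]
  ring

lemma continuous_melDeriv (a b : ℝ) : Continuous (melDeriv a b) := by
  unfold melDeriv
  fun_prop

lemma continuous_mel (a b : ℝ) : Continuous (Mel a b) := by
  unfold Mel
  fun_prop

lemma melDeriv_zero (a b : ℝ) : melDeriv a b 0 = -(3 * (a + 1) ^ 2 + 2 * b) * π := by
  simp only [melDeriv, mul_zero, sqrt_zero, zero_div, arctan_zero]
  ring

lemma mel_zero (a b : ℝ) :
    Mel a b 0 = -(π / 4) * (a + 1) ^ 2 * (5 * (a + 1) ^ 2 + 4 * b) := by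
  simp only [Mel, mul_zero, sqrt_zero, zero_div, arctan_zero]
  ring

theorem melnikov_differentiable_and_limits_general (a b : ℝ) :
    (∀ h : ℝ, 0 < h → DifferentiableAt ℝ (Mel a b) h) ∧
    Filter.Tendsto (deriv (Mel a b)) (nhdsWithin 0 (Set.Ioi 0))
      (nhds (-(3 * (a + 1) ^ 2 + 2 * b) * Real.pi)) ∧
    Filter.Tendsto (Mel a b) (nhdsWithin 0 (Set.Ioi 0))
      (nhds (-(Real.pi / 4) * (a + 1) ^ 2 * (5 * (a + 1) ^ 2 + 4 * b))) := by
  refine ⟨fun h hh => (hasDerivAt_mel a b hh).differentiableAt, ?_, ?_⟩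
  · rw [← melDeriv_zero]
    refine (continuous_melDeriv a b).continuousWithinAt.congr' ?_
    filter_upwards [self_mem_nhdsWithin] with h hh
    exact ((hasDerivAt_mel a b hh).deriv).symm
  · rw [← mel_zero]
    exact (continuous_mel a b).continuousWithinAt

/-- `M` is differentiable on `(0, ∞)`; `M'(h) → -(3(a+1)² + 2b)π` and
`M(h) → -(π/4)(a+1)²(5(a+1)² + 4b)` as `h → 0⁺`. -/
theorem melnikov_differentiable_and_limits (a b : ℝ) (ha : 1 < a) :
    (∀ h : ℝ, 0 < h → DifferentiableAt ℝ (Mel a b) h) ∧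
    Filter.Tendsto (deriv (Mel a b)) (nhdsWithin 0 (Set.Ioi 0))
      (nhds (-(3 * (a + 1) ^ 2 + 2 * b) * Real.pi)) ∧
    Filter.Tendsto (Mel a b) (nhdsWithin 0 (Set.Ioi 0))
      (nhds (-(Real.pi / 4) * (a + 1) ^ 2 * (5 * (a + 1) ^ 2 + 4 * b))) :=
  melnikov_differentiable_and_limits_general a b
end

section
/- For every a > 1, b < 0 and h > 0, the quantity 8√2·√h·a·(b - 2h)/((a²-2a+2h+1)(a²+2a+2h+1)) + 6(a+1)·arctan(√(2h)/(a+1)) + 6(1-a)·arctan(√(2h)/(a-1)) - 6π(a+1) is strictly negative. (This quantity equals the partial derivative with respect to a of the h-derivative M′(h; a, b) of the Melnikov function.) -/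
/-- The partial derivative with respect to `a` of `M'(h; a, b)` is negative:
for `a > 1`, `b < 0`, `h > 0`,
`8√2√h·a(b-2h)/((a²-2a+2h+1)(a²+2a+2h+1)) + 6(a+1)arctan(√(2h)/(a+1))
  + 6(1-a)arctan(√(2h)/(a-1)) - 6π(a+1) < 0`. -/
theorem melnikov_partial_a_of_Mprime_neg (a b h : ℝ) (ha : 1 < a) (hb : b < 0)
    (hh : 0 < h) :
    8 * Real.sqrt 2 * Real.sqrt h * a * (b - 2 * h)
        / ((a ^ 2 - 2 * a + 2 * h + 1) * (a ^ 2 + 2 * a + 2 * h + 1))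
      + 6 * (a + 1) * Real.arctan (Real.sqrt (2 * h) / (a + 1))
      + 6 * (1 - a) * Real.arctan (Real.sqrt (2 * h) / (a - 1))
      - 6 * Real.pi * (a + 1) < 0 := by
  have h2 : (0:ℝ) ≤ Real.sqrt 2 := Real.sqrt_nonneg 2
  have hsh : (0:ℝ) ≤ Real.sqrt h := Real.sqrt_nonneg h
  have hden : 0 < (a ^ 2 - 2 * a + 2 * h + 1) * (a ^ 2 + 2 * a + 2 * h + 1) := by
    nlinarith [sq_nonneg (a - 1), sq_nonneg (a + 1)]
  have hnum : 8 * Real.sqrt 2 * Real.sqrt h * a * (b - 2 * h) ≤ 0 := by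
    have : 0 ≤ 8 * Real.sqrt 2 * Real.sqrt h * a := by positivity
    nlinarith
  have t1 : 8 * Real.sqrt 2 * Real.sqrt h * a * (b - 2 * h)
      / ((a ^ 2 - 2 * a + 2 * h + 1) * (a ^ 2 + 2 * a + 2 * h + 1)) ≤ 0 :=
    div_nonpos_of_nonpos_of_nonneg hnum hden.le
  have t2 : 6 * (a + 1) * Real.arctan (Real.sqrt (2 * h) / (a + 1))
      < 6 * (a + 1) * (Real.pi / 2) := by
    have := Real.arctan_lt_pi_div_two (Real.sqrt (2 * h) / (a + 1))
    nlinarith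
  have t3 : 6 * (1 - a) * Real.arctan (Real.sqrt (2 * h) / (a - 1)) ≤ 0 := by
    have harg : 0 ≤ Real.sqrt (2 * h) / (a - 1) :=
      div_nonneg (Real.sqrt_nonneg _) (by linarith)
    have h0 : Real.arctan 0 ≤ Real.arctan (Real.sqrt (2 * h) / (a - 1)) :=
      Real.arctan_strictMono.monotone harg
    rw [Real.arctan_zero] at h0
    nlinarith [h0]
  have hpi := Real.pi_pos
  nlinarith
end

section
/- For every a > 1 and every h with 0 < h < (a² - 1)/2, the quantity √h·(a²-22a+4h+1)/(√2·(a²-2a+2h+1)) - √h·(a²+2a+4h+1)/(√2·(a²+2a+2h+1)) - π(a+1) + (11-a)·arctan(√(2h)/(a-1)) + (a+1)·arctan(√(2h)/(a+1)) is strictly negative. (This quantity equals the partial derivative with respect to a of M′(h; a, -(5/4)(a+1)²), the h-derivative of the Melnikov function evaluated along b = -(5/4)(a+1)².) -/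
/-!
Put `s = √(2h) ∈ (0, √(a² - 1))`. Besides the elementary bounds `arctan x ≤ x` and
`arctan x < π / 2`, the argument uses `arctan (s / p) ≤ π / 2 - p s / (p² + s²)`, which is
`arctan y ≥ y / (1 + y²)` at `y = p / s`. Which combination suffices depends on the region:
`a ≥ 11`; `s ≤ a - 1`; `s > a - 1` with `a ≤ 4`, where `s / ((a - 1)² + s²)` is smallest at
the endpoint `s = √(a² - 1)`; and `s > a - 1` with `4 < a < 11`. In each region what remains is
a polynomial inequality, closed with `3 < π < 3.15`.
-/

open Real

namespace Real

theorem arctan_le_self {x : ℝ} (hx : 0 ≤ x) : arctan x ≤ x := by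
  simpa only [tan_arctan] using le_tan (arctan_nonneg.2 hx) (arctan_lt_pi_div_two x)

theorem div_one_add_sq_le_arctan {x : ℝ} (hx : 0 ≤ x) : x / (1 + x ^ 2) ≤ arctan x := by
  have hθ : 0 ≤ arctan x := arctan_nonneg.2 hx
  have hsc : sin (arctan x) * cos (arctan x) = x / (1 + x ^ 2) := by
    rw [sin_arctan, cos_arctan, div_mul_div_comm, mul_one, ← sq, sq_sqrt (by positivity)]
  calc x / (1 + x ^ 2) = sin (arctan x) * cos (arctan x) := hsc.symm
    _ ≤ sin (arctan x) := mul_le_of_le_one_right (sin_arctan_nonneg.2 hx) (cos_le_one _)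
    _ ≤ arctan x := sin_le hθ

theorem arctan_div_le_pi_div_two_sub {p s : ℝ} (hp : 0 < p) (hs : 0 < s) :
    arctan (s / p) ≤ π / 2 - p * s / (p ^ 2 + s ^ 2) := by
  have hlow := div_one_add_sq_le_arctan (div_pos hp hs).le
  have heq : p / s / (1 + (p / s) ^ 2) = p * s / (p ^ 2 + s ^ 2) := by
    field_simp
    ring
  have hcompl : arctan (p / s) = π / 2 - arctan (s / p) := by
    rw [← inv_div, arctan_inv_of_pos (div_pos hs hp)]
  linarith

theorem mul_arctan_div_le {q s : ℝ} (hq : 0 < q) (hs : 0 ≤ s) : q * arctan (s / q) ≤ s :=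
  calc q * arctan (s / q) ≤ q * (s / q) :=
        mul_le_mul_of_nonneg_left (arctan_le_self (div_nonneg hs hq.le)) hq.le
    _ = s := mul_div_cancel₀ s hq.ne'

end Real

namespace MelnikovCurve

/-- With `s = √(2h)`, `majorant a s - π (a + 1)` bounds the quantity of the theorem from above:
the two rational terms are at most `s - 10 a s / ((a - 1)² + s²)` and `0`. -/
noncomputable def majorant (a s : ℝ) : ℝ :=
  s - 10 * a * s / ((a - 1) ^ 2 + s ^ 2) + (11 - a) * arctan (s / (a - 1))
    + (a + 1) * arctan (s / (a + 1))

variable {a s : ℝ}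

theorem majorant_lt_of_eleven_le (h11 : 11 ≤ a) (hs : 0 < s) (hsa : s ^ 2 < a ^ 2 - 1) :
    majorant a s < π * (a + 1) := by
  have hq : 0 < a + 1 := by linarith
  have hrat : 0 ≤ 10 * a * s / ((a - 1) ^ 2 + s ^ 2) := by
    have : 0 < a := by linarith
    positivity
  have harc : (11 - a) * arctan (s / (a - 1)) ≤ 0 :=
    mul_nonpos_of_nonpos_of_nonneg (by linarith)
      (arctan_nonneg.2 (div_nonneg hs.le (by linarith)))
  have hX : (a + 1) * arctan (s / (a + 1)) ≤ (a + 1) * (π / 2) :=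
    mul_le_mul_of_nonneg_left (arctan_lt_pi_div_two _).le hq.le
  have hsq : s < a + 1 := by nlinarith
  have hπ : a + 1 < (a + 1) * (π / 2) := by nlinarith [pi_gt_three]
  unfold majorant
  linarith

theorem majorant_lt_of_le_sub_one (ha : 1 < a) (h11 : a < 11) (hs : 0 < s) (hsp : s ≤ a - 1) :
    majorant a s < π * (a + 1) := by
  have hp : 0 < a - 1 := by linarith
  have harc : (11 - a) * arctan (s / (a - 1)) ≤ (11 - a) * (s / (a - 1)) :=
    mul_le_mul_of_nonneg_left (arctan_le_self (div_nonneg hs.le hp.le)) (by linarith)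
  have hX := mul_arctan_div_le (by linarith : (0 : ℝ) < a + 1) hs.le
  have hrat : 5 * a * s / (a - 1) ^ 2 ≤ 10 * a * s / ((a - 1) ^ 2 + s ^ 2) := by
    rw [div_le_div_iff₀ (by positivity) (by positivity)]
    have hsq : s ^ 2 ≤ (a - 1) ^ 2 := pow_le_pow_left₀ hs.le hsp 2
    nlinarith [mul_nonneg (mul_pos (by linarith : (0:ℝ) < a) hs).le (sub_nonneg.2 hsq)]
  have hpoly : 2 * s + (11 - a) * (s / (a - 1)) - 5 * a * s / (a - 1) ^ 2
      = s * (a ^ 2 + 3 * a - 9) / (a - 1) ^ 2 := by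
    field_simp
    ring
  -- affine in `s`: interpolate between `s = 0` and `s = a - 1`
  have hend : s * (a ^ 2 + 3 * a - 9) / (a - 1) ^ 2 < π * (a + 1) := by
    rw [div_lt_iff₀ (by positivity)]
    have hq : 0 < a + 1 := by linarith
    nlinarith [mul_nonneg (sub_nonneg.2 hsp) (mul_pos (mul_pos pi_pos hq) hp).le,
      mul_nonneg hs.le (mul_nonneg (sub_nonneg.2 pi_gt_three.le) (mul_pos hp hq).le),
      mul_pos hs (by nlinarith : (0:ℝ) < 2 * a ^ 2 - 3 * a + 6)]
  unfold majorant
  linarith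

theorem majorant_le_of_lt_eleven (ha : 1 < a) (h11 : a < 11) (hs : 0 < s) :
    majorant a s ≤ s - (-a ^ 2 + 22 * a - 11) * s / ((a - 1) ^ 2 + s ^ 2) + (11 - a) * (π / 2)
      + (a + 1) * arctan (s / (a + 1)) := by
  have hD : 0 < (a - 1) ^ 2 + s ^ 2 := by positivity
  have harc : (11 - a) * arctan (s / (a - 1))
      ≤ (11 - a) * (π / 2) - (11 - a) * ((a - 1) * s / ((a - 1) ^ 2 + s ^ 2)) := by
    rw [← mul_sub]
    exact mul_le_mul_of_nonneg_left (arctan_div_le_pi_div_two_sub (by linarith) hs) (by linarith)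
  have hcomb : 10 * a * s / ((a - 1) ^ 2 + s ^ 2)
        + (11 - a) * ((a - 1) * s / ((a - 1) ^ 2 + s ^ 2))
      = (-a ^ 2 + 22 * a - 11) * s / ((a - 1) ^ 2 + s ^ 2) := by
    field_simp
    ring
  unfold majorant
  linarith

theorem pi_mul_sq_mul_three_sub_lt (ha : 1 < a) (h4 : a ≤ 4) :
    3 * π * a ^ 2 * (3 - a) < (a + 1) * (-5 * a ^ 2 + 26 * a - 11) := by
  rcases le_or_gt a 3 with h3 | h3
  · nlinarith [pi_lt_d2, mul_nonneg (sq_nonneg a) (sub_nonneg.2 h3),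
      mul_nonneg (sub_nonneg.2 ha.le) (sub_nonneg.2 h3)]
  · nlinarith [mul_pos (mul_pos pi_pos (pow_pos (by linarith : (0:ℝ) < a) 2)) (sub_pos.2 h3)]

theorem majorant_lt_of_le_four (ha : 1 < a) (h4 : a ≤ 4) (hsp : a - 1 < s)
    (hsa : s ^ 2 < a ^ 2 - 1) :
    majorant a s < π * (a + 1) := by
  have hp : 0 < a - 1 := by linarith
  have hs : 0 < s := by linarith
  set w := √(a ^ 2 - 1)
  have hw2 : w ^ 2 = a ^ 2 - 1 := sq_sqrt (by nlinarith)
  have hsw : s < w := lt_of_pow_lt_pow_left₀ 2 (sqrt_nonneg _) (hw2 ▸ hsa)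
  have hwa : a ^ 2 - 1 ≤ a * w := by nlinarith
  have hK : 0 < -5 * a ^ 2 + 26 * a - 11 := by nlinarith
  -- `s / ((a - 1)² + s²)` decreases for `s ≥ a - 1`, and `(a - 1)² + w² = 2a(a - 1)`.
  have hsD : w / (2 * a * (a - 1)) ≤ s / ((a - 1) ^ 2 + s ^ 2) := by
    rw [div_le_div_iff₀ (by positivity) (by positivity)]
    have hsw' : (a - 1) ^ 2 < s * w := by nlinarith
    nlinarith [mul_nonneg (sub_nonneg.2 hsw.le) (sub_nonneg.2 hsw'.le)]
  have hwK : 0 < w * (-5 * a ^ 2 + 26 * a - 11) - 3 * π * a * (a - 1) * (3 - a) := by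
    have : 0 < a * (w * (-5 * a ^ 2 + 26 * a - 11) - 3 * π * a * (a - 1) * (3 - a)) := by
      nlinarith [mul_le_mul_of_nonneg_right hwa hK.le,
        mul_lt_mul_of_pos_left (pi_mul_sq_mul_three_sub_lt ha h4) hp]
    exact (pos_iff_pos_of_mul_pos this).1 (by linarith)
  have hC : 0 ≤ -a ^ 2 + 22 * a - 11 := by nlinarith
  have hrat : (-a ^ 2 + 22 * a - 11) * w / (2 * a * (a - 1))
      ≤ (-a ^ 2 + 22 * a - 11) * s / ((a - 1) ^ 2 + s ^ 2) := by
    rw [mul_div_assoc, mul_div_assoc]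
    exact mul_le_mul_of_nonneg_left hsD hC
  have hend : 2 * w + (11 - a) * (π / 2) - π * (a + 1)
      ≤ (-a ^ 2 + 22 * a - 11) * w / (2 * a * (a - 1)) := by
    rw [le_div_iff₀ (by positivity)]
    nlinarith
  linarith [majorant_le_of_lt_eleven ha (by linarith) hs,
    mul_arctan_div_le (by linarith : (0:ℝ) < a + 1) hs.le]

theorem majorant_lt_of_four_lt (h4 : 4 < a) (h11 : a < 11) (hsp : a - 1 < s)
    (hsa : s ^ 2 < a ^ 2 - 1) :
    majorant a s < π * (a + 1) := by
  have hp : 0 < a - 1 := by linarith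
  have hs : 0 < s := by linarith
  have hsa' : s < a := by nlinarith
  have hC : 0 < (-a ^ 2 + 22 * a - 11) * s := mul_pos (by nlinarith) hs
  have hrat : (-a ^ 2 + 22 * a - 11) * s / (2 * a * (a - 1))
      < (-a ^ 2 + 22 * a - 11) * s / ((a - 1) ^ 2 + s ^ 2) :=
    div_lt_div_of_pos_left hC (by positivity) (by nlinarith)
  -- affine in `s`: interpolate between `s = a - 1` and `s = a`
  have hend : s - π * (a - 5) ≤ (-a ^ 2 + 22 * a - 11) * s / (2 * a * (a - 1)) := by
    rw [le_div_iff₀ (by positivity)]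
    have hlo : 0 ≤ 2 * π * a * (a - 5) - (3 * a ^ 2 - 24 * a + 11) := by
      nlinarith [pi_gt_three, pi_lt_d2, mul_nonneg (sub_nonneg.2 pi_gt_three.le)
        (mul_nonneg (by linarith : (0:ℝ) ≤ a) (by linarith : (0:ℝ) ≤ a - 4))]
    have hhi : 0 ≤ 2 * π * (a - 1) * (a - 5) - (3 * a ^ 2 - 24 * a + 11) := by
      nlinarith [pi_gt_three, pi_lt_d2, mul_nonneg (sub_nonneg.2 pi_gt_three.le)
        (mul_nonneg hp.le (by linarith : (0:ℝ) ≤ a - 4))]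
    nlinarith [mul_nonneg (mul_nonneg (sub_nonneg.2 hsa'.le) hp.le) hlo,
      mul_nonneg (mul_nonneg (sub_nonneg.2 hsp.le) (by linarith : (0:ℝ) ≤ a)) hhi]
  have hX : (a + 1) * arctan (s / (a + 1)) ≤ (a + 1) * (π / 2) :=
    mul_le_mul_of_nonneg_left (arctan_lt_pi_div_two _).le (by linarith)
  linarith [majorant_le_of_lt_eleven (by linarith) h11 hs]

theorem majorant_lt (ha : 1 < a) (hs : 0 < s) (hsa : s ^ 2 < a ^ 2 - 1) :
    majorant a s < π * (a + 1) := by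
  rcases le_or_gt 11 a with h11 | h11
  · exact majorant_lt_of_eleven_le h11 hs hsa
  rcases le_or_gt s (a - 1) with hsp | hsp
  · exact majorant_lt_of_le_sub_one ha h11 hs hsp
  rcases le_or_gt a 4 with h4 | h4
  · exact majorant_lt_of_le_four ha h4 hsp hsa
  · exact majorant_lt_of_four_lt h4 h11 hsp hsa

theorem partial_a_neg_of_sq_lt (ha : 1 < a) (hs : 0 < s) (hsa : s ^ 2 < a ^ 2 - 1) :
    s * ((a - 1) ^ 2 + 2 * s ^ 2 - 20 * a) / (2 * ((a - 1) ^ 2 + s ^ 2))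
      - s * ((a + 1) ^ 2 + 2 * s ^ 2) / (2 * ((a + 1) ^ 2 + s ^ 2))
      - π * (a + 1) + (11 - a) * arctan (s / (a - 1)) + (a + 1) * arctan (s / (a + 1)) < 0 := by
  have hD : 0 < (a - 1) ^ 2 + s ^ 2 := by positivity
  have hfirst : s - 10 * a * s / ((a - 1) ^ 2 + s ^ 2)
      - s * ((a - 1) ^ 2 + 2 * s ^ 2 - 20 * a) / (2 * ((a - 1) ^ 2 + s ^ 2))
      = s * (a - 1) ^ 2 / (2 * ((a - 1) ^ 2 + s ^ 2)) := by
    field_simp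
    ring
  have hgap : 0 ≤ s * (a - 1) ^ 2 / (2 * ((a - 1) ^ 2 + s ^ 2)) := by positivity
  have hsecond : 0 ≤ s * ((a + 1) ^ 2 + 2 * s ^ 2) / (2 * ((a + 1) ^ 2 + s ^ 2)) := by positivity
  have := majorant_lt ha hs hsa
  unfold majorant at this
  linarith

end MelnikovCurve

/-- For `a > 1` and `0 < h < (a²-1)/2`,
`√h(a²-22a+4h+1)/(√2(a²-2a+2h+1)) - √h(a²+2a+4h+1)/(√2(a²+2a+2h+1)) - π(a+1)
  + (11-a)arctan(√(2h)/(a-1)) + (a+1)arctan(√(2h)/(a+1)) < 0`. -/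
theorem melnikov_partial_a_along_curve_neg (a h : ℝ) (ha : 1 < a)
    (hh : 0 < h) (hh2 : h < (a ^ 2 - 1) / 2) :
    Real.sqrt h * (a ^ 2 - 22 * a + 4 * h + 1)
        / (Real.sqrt 2 * (a ^ 2 - 2 * a + 2 * h + 1))
      - Real.sqrt h * (a ^ 2 + 2 * a + 4 * h + 1)
        / (Real.sqrt 2 * (a ^ 2 + 2 * a + 2 * h + 1))
      - Real.pi * (a + 1)
      + (11 - a) * Real.arctan (Real.sqrt (2 * h) / (a - 1))
      + (a + 1) * Real.arctan (Real.sqrt (2 * h) / (a + 1)) < 0 := by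
  obtain ⟨s, hs, rfl⟩ : ∃ s, 0 < s ∧ h = s ^ 2 / 2 :=
    ⟨√(2 * h), by positivity, by rw [sq_sqrt (by positivity)]; ring⟩
  have hsqrt : √(s ^ 2 / 2) = s / √2 := by rw [sqrt_div' _ zero_le_two, sqrt_sq hs.le]
  have hsqrt2 : √(2 * (s ^ 2 / 2)) = s := by rw [mul_div_cancel₀ _ two_ne_zero, sqrt_sq hs.le]
  have hrat (X D : ℝ) : s / √2 * X / (√2 * D) = s * X / (2 * D) := by
    rw [div_mul_eq_mul_div, div_div, ← mul_assoc, mul_self_sqrt zero_le_two]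
  rw [hsqrt, hsqrt2, hrat, hrat]
  convert MelnikovCurve.partial_a_neg_of_sq_lt ha hs (by linarith) using 6 <;> ring
end

section
/- For every a > 1, every h > 0 and every b with -(3/2)(a+1)² < b < 0, the quantity -2b·w₁(h) - 5πa³ - 15πa² - a(6πh + 20√2·√h + 15π) - π(6h+5) - (a-1)(5a²-10a+6h+5)·arctan(√(2h)/(a-1)) + (a+1)(5a²+10a+6h+5)·arctan(√(2h)/(a+1)) is strictly negative, where w₁(h) = (a-1)·arctan(√(2h)/(a-1)) - (a+1)·arctan(√(2h)/(a+1)) + π(a+1). (This quantity equals the partial derivative of the Melnikov function M(h; a, b) with respect to a.) -/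
set_option maxHeartbeats 1000000 in
/-- For `a > 1`, `h > 0` and `-(3/2)(a+1)² < b < 0`, the partial derivative of
`M(h; a, b)` with respect to `a` is negative, where
`w₁(h) = (a-1)arctan(√(2h)/(a-1)) - (a+1)arctan(√(2h)/(a+1)) + π(a+1)`. -/
theorem melnikov_partial_a_neg (a b h : ℝ) (ha : 1 < a) (hh : 0 < h)
    (hb1 : -(3 / 2) * (a + 1) ^ 2 < b) (hb2 : b < 0) :
    -2 * b * ((a - 1) * Real.arctan (Real.sqrt (2 * h) / (a - 1))
        - (a + 1) * Real.arctan (Real.sqrt (2 * h) / (a + 1)) + Real.pi * (a + 1))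
      - 5 * Real.pi * a ^ 3 - 15 * Real.pi * a ^ 2
      - a * (6 * Real.pi * h + 20 * Real.sqrt 2 * Real.sqrt h + 15 * Real.pi)
      - Real.pi * (6 * h + 5)
      - (a - 1) * (5 * a ^ 2 - 10 * a + 6 * h + 5)
        * Real.arctan (Real.sqrt (2 * h) / (a - 1))
      + (a + 1) * (5 * a ^ 2 + 10 * a + 6 * h + 5)
        * Real.arctan (Real.sqrt (2 * h) / (a + 1)) < 0 := by
  set A := Real.arctan (Real.sqrt (2 * h) / (a - 1)) with hAdef
  set B := Real.arctan (Real.sqrt (2 * h) / (a + 1)) with hBdef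
  have hs : 0 < Real.sqrt (2 * h) := Real.sqrt_pos.2 (by linarith)
  have hA0 : 0 < A := by
    have := Real.arctan_strictMono
      (show (0:ℝ) < Real.sqrt (2 * h) / (a - 1) from div_pos hs (by linarith))
    rw [Real.arctan_zero] at this
    exact this
  have hA2 : A < Real.pi / 2 := Real.arctan_lt_pi_div_two _
  have hB0 : 0 < B := by
    have := Real.arctan_strictMono
      (show (0:ℝ) < Real.sqrt (2 * h) / (a + 1) from div_pos hs (by linarith))
    rw [Real.arctan_zero] at this
    exact this
  have hB2 : B < Real.pi / 2 := Real.arctan_lt_pi_div_two _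
  have hπ : 0 < Real.pi := Real.pi_pos
  have hsq : 0 ≤ Real.sqrt 2 * Real.sqrt h :=
    mul_nonneg (Real.sqrt_nonneg _) (Real.sqrt_nonneg _)
  clear_value A B
  set w : ℝ := (a - 1) * A - (a + 1) * B + Real.pi * (a + 1) with hwdef
  set Cα : ℝ := (a - 1) * (-2 * a ^ 2 + 16 * a - 2 - 6 * h) with hCαdef
  set Cβ : ℝ := 2 * (a + 1) ^ 3 + 6 * h * (a + 1) with hCβdef
  have hw : 0 < w := by
    rw [hwdef]
    have h1 : 0 < (a - 1) * A := mul_pos (by linarith) hA0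
    have h2 : 0 < (a + 1) * (Real.pi - B) := mul_pos (by linarith) (by linarith)
    nlinarith [h1, h2]
  have hCβ : 0 < Cβ := by
    rw [hCβdef]
    have h1 : 0 < (a + 1) ^ 3 := by positivity
    nlinarith [mul_pos hh (show (0:ℝ) < a + 1 by linarith)]
  have hβterm : Cβ * (B - Real.pi) < Cβ * (-(Real.pi / 2)) :=
    mul_lt_mul_of_pos_left (by linarith) hCβ
  have hαterm : Cα * A < Real.pi / 2 * Cβ := by
    rcases le_or_gt Cα 0 with hc | hc
    · have h1 : Cα * A ≤ 0 := mul_nonpos_of_nonpos_of_nonneg hc hA0.le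
      have h2 : 0 < Real.pi / 2 * Cβ := mul_pos (by linarith) hCβ
      linarith
    · have hlt : Cα < Cβ := by
        rw [hCαdef, hCβdef]
        nlinarith [sq_nonneg (a - 3/2), mul_pos hh (show (0:ℝ) < a - 1 by linarith),
          mul_pos hh (show (0:ℝ) < a + 1 by linarith)]
      calc Cα * A < Cα * (Real.pi / 2) := mul_lt_mul_of_pos_left hA2 hc
        _ ≤ Cβ * (Real.pi / 2) := by nlinarith
        _ = Real.pi / 2 * Cβ := by ring
  have hG : 3 * (a + 1) ^ 2 * w
      - 5 * Real.pi * a ^ 3 - 15 * Real.pi * a ^ 2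
      - a * (6 * Real.pi * h + 20 * Real.sqrt 2 * Real.sqrt h + 15 * Real.pi)
      - Real.pi * (6 * h + 5)
      - (a - 1) * (5 * a ^ 2 - 10 * a + 6 * h + 5) * A
      + (a + 1) * (5 * a ^ 2 + 10 * a + 6 * h + 5) * B
      = Cα * A + Cβ * (B - Real.pi)
        - 20 * (Real.sqrt 2 * Real.sqrt h) * a := by
    rw [hwdef, hCαdef, hCβdef]; ring
  clear_value w Cα Cβ
  have h20 : 0 ≤ 20 * (Real.sqrt 2 * Real.sqrt h) * a := by
    have ha0 : (0:ℝ) ≤ a := by linarith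
    positivity
  have hmain : 3 * (a + 1) ^ 2 * w
      - 5 * Real.pi * a ^ 3 - 15 * Real.pi * a ^ 2
      - a * (6 * Real.pi * h + 20 * Real.sqrt 2 * Real.sqrt h + 15 * Real.pi)
      - Real.pi * (6 * h + 5)
      - (a - 1) * (5 * a ^ 2 - 10 * a + 6 * h + 5) * A
      + (a + 1) * (5 * a ^ 2 + 10 * a + 6 * h + 5) * B < 0 := by
    rw [hG]; linarith [hαterm, hβterm, h20]
  have hbw : -2 * b * w < 3 * (a + 1) ^ 2 * w :=
    mul_lt_mul_of_pos_right (by linarith) hw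
  linarith [hbw, hmain]
end

section
/- Let a > 1 and -(3/2)(a+1)² < b < 0. If there exists h̄ > 0 with M′(h̄) > 0, then the derivative M′ of the Melnikov function has exactly two zeros h₁₁ < h₁₂ on (0,∞); moreover M′(h) < 0 for 0 < h < h₁₁, M′(h) > 0 for h₁₁ < h < h₁₂, and M′(h) < 0 for h > h₁₂. -/
open Real Set Filter Topology

theorem StrictConcaveOn.min_lt_of_mem_Ioo {s : Set ℝ} {f : ℝ → ℝ} (hf : StrictConcaveOn ℝ s f)
    {x y z : ℝ} (hx : x ∈ s) (hz : z ∈ s) (hxy : x < y) (hyz : y < z) :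
    min (f x) (f z) < f y :=
  hf.lt_on_openSegment hx hz (hxy.trans hyz).ne
    (by rw [openSegment_eq_Ioo (hxy.trans hyz)]; exact ⟨hxy, hyz⟩)

theorem StrictConcaveOn.exists_two_zeros {f : ℝ → ℝ} {x₀ t₀ T : ℝ}
    (hf : StrictConcaveOn ℝ (Ici x₀) f) (hc : ContinuousOn f (Ici x₀))
    (hx₀ : f x₀ < 0) (ht₀ : x₀ < t₀) (hft₀ : 0 < f t₀) (hT : t₀ < T) (hfT : f T < 0) :
    ∃ z₁ z₂, x₀ < z₁ ∧ z₁ < z₂ ∧ f z₁ = 0 ∧ f z₂ = 0 ∧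
      (∀ t, x₀ ≤ t → t < z₁ → f t < 0) ∧ (∀ t, z₁ < t → t < z₂ → 0 < f t) ∧
      ∀ t, z₂ < t → f t < 0 := by
  have hmem {t} (ht : x₀ ≤ t) : t ∈ Ici x₀ := ht
  obtain ⟨z₁, ⟨hxz₁, hz₁t₀⟩, hz₁⟩ :=
    intermediate_value_Ioo ht₀.le (hc.mono Icc_subset_Ici_self) ⟨hx₀, hft₀⟩
  obtain ⟨z₂, ⟨ht₀z₂, hz₂T⟩, hz₂⟩ :=
    intermediate_value_Ioo' hT.le (hc.mono fun t ht => ht₀.le.trans ht.1) ⟨hfT, hft₀⟩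
  refine ⟨z₁, z₂, hxz₁, hz₁t₀.trans ht₀z₂, hz₁, hz₂, ?_, ?_, ?_⟩
  · intro t hxt htz₁
    by_contra! hft
    exact (le_min hft hft₀.le).not_gt
      (hz₁ ▸ hf.min_lt_of_mem_Ioo (hmem hxt) (hmem ht₀.le) htz₁ hz₁t₀)
  · intro t hz₁t htz₂
    rcases lt_trichotomy t t₀ with hlt | rfl | hgt
    · have := hf.min_lt_of_mem_Ioo (hmem hxz₁.le) (hmem ht₀.le) hz₁t hlt
      simpa [hz₁, hft₀.le] using this
    · exact hft₀
    · have := hf.min_lt_of_mem_Ioo (hmem ht₀.le) (hmem (ht₀.trans ht₀z₂).le) hgt htz₂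
      simpa [hz₂, hft₀.le] using this
  · intro t hz₂t
    by_contra! hft
    exact (le_min hft₀.le hft).not_gt (hz₂ ▸
      hf.min_lt_of_mem_Ioo (hmem ht₀.le) (hmem (ht₀.trans (ht₀z₂.trans hz₂t)).le) ht₀z₂ hz₂t)

theorem two_mul_mul_div_sq_add_sq_le_one (c t : ℝ) : 2 * t * c / (c ^ 2 + t ^ 2) ≤ 1 := by
  rcases eq_or_ne (c ^ 2 + t ^ 2) 0 with h | h
  · simp [h]
  · rw [div_le_one (by positivity)]
    linarith [two_mul_le_add_sq t c]

namespace Melnikov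

noncomputable def arctanWeighted (b c t : ℝ) : ℝ :=
  (3 * c ^ 2 + 2 * b + t ^ 2) * arctan (t / c)

noncomputable def arctanWeighted' (b c t : ℝ) : ℝ :=
  2 * t * arctan (t / c) + c * (3 * c ^ 2 + 2 * b + t ^ 2) / (c ^ 2 + t ^ 2)

noncomputable def arctanWeighted'' (b c t : ℝ) : ℝ :=
  2 * arctan (t / c) + 2 * t * c / (c ^ 2 + t ^ 2) - 4 * t * c * (c ^ 2 + b) / (c ^ 2 + t ^ 2) ^ 2

noncomputable def arctanPotential (b c t : ℝ) : ℝ :=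
  (c ^ 2 + t ^ 2) * (5 * c ^ 2 + 4 * b + t ^ 2) * arctan (t / c) / 4

noncomputable def Φ (a b t : ℝ) : ℝ :=
  -(π / 4) * (a + 1) ^ 2 * (5 * a ^ 2 + 10 * a + 4 * b + 5) - (15 * a ^ 2 + 4 * b + 5) * t / 2
    - (3 * a ^ 2 + 6 * a + 2 * b + 3) * π * t ^ 2 / 2 - 13 * t ^ 3 / 6 - π * t ^ 4 / 4
    - arctanPotential b (a - 1) t + arctanPotential b (a + 1) t

noncomputable def F (a b t : ℝ) : ℝ :=
  -π * (3 * (a + 1) ^ 2 + 2 * b) - π * t ^ 2 - 6 * t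
    - arctanWeighted b (a - 1) t + arctanWeighted b (a + 1) t

noncomputable def F' (a b t : ℝ) : ℝ :=
  -2 * π * t - 6 - arctanWeighted' b (a - 1) t + arctanWeighted' b (a + 1) t

noncomputable def F'' (a b t : ℝ) : ℝ :=
  -2 * π - arctanWeighted'' b (a - 1) t + arctanWeighted'' b (a + 1) t

section Derivatives

variable (b : ℝ) {c : ℝ}

theorem hasDerivAt_arctan_div (hc : c ≠ 0) (t : ℝ) :
    HasDerivAt (fun x => arctan (x / c)) (c / (c ^ 2 + t ^ 2)) t :=
  ((hasDerivAt_id' t).div_const c).arctan.congr_deriv (by field_simp)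

theorem hasDerivAt_arctanPotential (hc : c ≠ 0) (t : ℝ) :
    HasDerivAt (arctanPotential b c)
      (t * arctanWeighted b c t + c * (5 * c ^ 2 + 4 * b + t ^ 2) / 4) t := by
  have h := (((hasDerivAt_pow 2 t).const_add (c ^ 2)).mul
    ((hasDerivAt_pow 2 t).const_add (5 * c ^ 2 + 4 * b))).mul (hasDerivAt_arctan_div hc t)
  refine (h.div_const 4).congr_deriv ?_
  simp only [arctanWeighted, Pi.mul_apply]
  field_simp
  ring

theorem hasDerivAt_arctanWeighted (hc : c ≠ 0) (t : ℝ) :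
    HasDerivAt (arctanWeighted b c) (arctanWeighted' b c t) t := by
  have h := ((hasDerivAt_pow 2 t).const_add (3 * c ^ 2 + 2 * b)).mul (hasDerivAt_arctan_div hc t)
  refine h.congr_deriv ?_
  simp only [arctanWeighted']
  field_simp
  ring

theorem hasDerivAt_arctanWeighted' (hc : c ≠ 0) (t : ℝ) :
    HasDerivAt (arctanWeighted' b c) (arctanWeighted'' b c t) t := by
  have hden : c ^ 2 + t ^ 2 ≠ 0 := by positivity
  have h := (((hasDerivAt_id' t).const_mul 2).mul (hasDerivAt_arctan_div hc t)).add
    ((((hasDerivAt_pow 2 t).const_add (3 * c ^ 2 + 2 * b)).const_mul c).div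
      ((hasDerivAt_pow 2 t).const_add (c ^ 2)) hden)
  refine h.congr_deriv ?_
  simp only [arctanWeighted'']
  field_simp
  ring

end Derivatives

section

variable {a : ℝ} (b : ℝ) (hm : a - 1 ≠ 0) (hp : a + 1 ≠ 0)
include hm hp

theorem hasDerivAt_Φ (t : ℝ) : HasDerivAt (Φ a b) (t * F a b t) t := by
  have h := ((((((hasDerivAt_const t
    (-(π / 4) * (a + 1) ^ 2 * (5 * a ^ 2 + 10 * a + 4 * b + 5))).sub
    (((hasDerivAt_id' t).const_mul (15 * a ^ 2 + 4 * b + 5)).div_const 2)).sub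
    (((hasDerivAt_pow 2 t).const_mul ((3 * a ^ 2 + 6 * a + 2 * b + 3) * π)).div_const 2)).sub
    (((hasDerivAt_pow 3 t).const_mul 13).div_const 6)).sub
    (((hasDerivAt_pow 4 t).const_mul π).div_const 4)).sub
    (hasDerivAt_arctanPotential b hm t)).add (hasDerivAt_arctanPotential b hp t)
  refine h.congr_deriv ?_
  simp only [F, arctanWeighted]
  push_cast
  ring

theorem hasDerivAt_F (t : ℝ) : HasDerivAt (F a b) (F' a b t) t := by
  have h := ((((hasDerivAt_const t (-π * (3 * (a + 1) ^ 2 + 2 * b))).sub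
    ((hasDerivAt_pow 2 t).const_mul π)).sub ((hasDerivAt_id' t).const_mul 6)).sub
    (hasDerivAt_arctanWeighted b hm t)).add (hasDerivAt_arctanWeighted b hp t)
  refine h.congr_deriv ?_
  simp only [F']
  push_cast
  ring

theorem hasDerivAt_F' (t : ℝ) : HasDerivAt (F' a b) (F'' a b t) t := by
  have h := ((((hasDerivAt_id' t).const_mul (-2 * π)).sub_const 6).sub
    (hasDerivAt_arctanWeighted' b hm t)).add (hasDerivAt_arctanWeighted' b hp t)
  refine h.congr_deriv ?_
  simp only [F'']
  ring

end

section Bounds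

variable {b c t : ℝ}

theorem le_arctanWeighted'' (hc : 0 < c) (ht : 0 ≤ t) (hb : b ≤ 0) :
    2 * arctan (t / c) - 2 ≤ arctanWeighted'' b c t := by
  have h₁ : 0 ≤ 2 * t * c / (c ^ 2 + t ^ 2) := by positivity
  have h₂ : 4 * t * c * (c ^ 2 + b) / (c ^ 2 + t ^ 2) ^ 2 ≤ 2 := by
    rw [div_le_iff₀ (by positivity)]
    have := mul_nonneg ht hc.le
    nlinarith [two_mul_le_add_sq t c, mul_nonneg this (sq_nonneg c),
      mul_nonneg this (neg_nonneg.2 hb)]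
  rw [arctanWeighted'']
  linarith

theorem arctanWeighted''_le (hc : 0 < c) (ht : 0 ≤ t) (hb : -(3 / 2) * c ^ 2 < b) :
    arctanWeighted'' b c t ≤ 2 * arctan (t / c) + 2 := by
  have h₂ : -1 ≤ 4 * t * c * (c ^ 2 + b) / (c ^ 2 + t ^ 2) ^ 2 := by
    rw [le_div_iff₀ (by positivity)]
    have := mul_nonneg ht hc.le
    nlinarith [two_mul_le_add_sq t c, mul_nonneg this (sq_nonneg c)]
  rw [arctanWeighted'']
  linarith [two_mul_mul_div_sq_add_sq_le_one c t]

end Bounds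


variable {a b : ℝ}

theorem F''_neg (ha : 1 < a) (hb₁ : -(3 / 2) * (a + 1) ^ 2 < b) (hb₂ : b ≤ 0) {t : ℝ}
    (ht : 0 ≤ t) : F'' a b t < 0 := by
  have hm : 0 < a - 1 := by linarith
  have hp : 0 < a + 1 := by linarith
  have harctan : arctan (t / (a + 1)) ≤ arctan (t / (a - 1)) :=
    arctan_strictMono.monotone (div_le_div_of_nonneg_left ht hm (by linarith))
  rw [F'']
  linarith [le_arctanWeighted'' hm ht hb₂, arctanWeighted''_le hp ht hb₁, pi_gt_three]

theorem F_zero_neg (hb : -(3 / 2) * (a + 1) ^ 2 < b) : F a b 0 < 0 := by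
  have hK : 0 < 3 * (a + 1) ^ 2 + 2 * b := by nlinarith
  simpa [F, arctanWeighted] using mul_pos pi_pos hK

theorem F_neg_of_two_mul_add_one_le (ha : 1 < a) (hb : -(3 / 2) * (a + 1) ^ 2 < b) {T : ℝ}
    (hT : 2 * (a + 1) ≤ T) : F a b T < 0 := by
  have hT₀ : 0 < T := by linarith
  have hK : 0 < 3 * (a + 1) ^ 2 + 2 * b := by nlinarith
  have hWm : 0 ≤ arctanWeighted b (a - 1) T :=
    mul_nonneg (by nlinarith) (arctan_nonneg.2 (div_nonneg hT₀.le (by linarith)))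
  have hWp : arctanWeighted b (a + 1) T ≤ (3 * (a + 1) ^ 2 + 2 * b + T ^ 2) * (π / 2) :=
    mul_le_mul_of_nonneg_left (arctan_lt_pi_div_two _).le (by positivity)
  rw [F]
  nlinarith [mul_pos pi_pos hK, mul_pos pi_pos (pow_pos hT₀ 2)]

theorem continuous_F (a b : ℝ) : Continuous (F a b) := by
  unfold F arctanWeighted
  fun_prop

theorem strictConcaveOn_F (ha : 1 < a) (hb₁ : -(3 / 2) * (a + 1) ^ 2 < b) (hb₂ : b ≤ 0) :
    StrictConcaveOn ℝ (Ici 0) (F a b) := by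
  have hm : a - 1 ≠ 0 := by linarith
  have hp : a + 1 ≠ 0 := by linarith
  have hF : deriv (F a b) = F' a b := funext fun t => (hasDerivAt_F b hm hp t).deriv
  refine strictConcaveOn_of_deriv2_neg (convex_Ici 0) (continuous_F a b).continuousOn
    fun t ht => ?_
  rw [interior_Ici] at ht
  rw [Function.iterate_succ_apply, Function.iterate_one, hF, (hasDerivAt_F' b hm hp t).deriv]
  exact F''_neg ha hb₁ hb₂ ht.le

theorem mel_eq_Φ_sqrt (a b : ℝ) {h : ℝ} (hh : 0 ≤ h) : Mel a b h = Φ a b √(2 * h) := by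
  obtain ⟨t, ht, rfl⟩ : ∃ t, 0 ≤ t ∧ h = t ^ 2 / 2 :=
    ⟨√(2 * h), sqrt_nonneg _, by rw [sq_sqrt (by positivity)]; ring⟩
  have hsqrt : √(t ^ 2 / 2) = t / √2 := by rw [sqrt_div' _ zero_le_two, sqrt_sq ht]
  rw [Mel, Φ, arctanPotential, arctanPotential, hsqrt, mul_div_cancel₀ _ two_ne_zero, sqrt_sq ht]
  field_simp
  rw [sq_sqrt zero_le_two]
  ring

theorem hasDerivAt_mel (ha : 1 < a) {h : ℝ} (hh : 0 < h) :
    HasDerivAt (Mel a b) (F a b √(2 * h)) h := by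
  have hsqrt := ((hasDerivAt_id' h).const_mul 2).sqrt (by positivity)
  have hΦ := (hasDerivAt_Φ b (by linarith : a - 1 ≠ 0) (by linarith) √(2 * h)).comp h hsqrt
  have heq : Mel a b =ᶠ[𝓝 h] Φ a b ∘ fun x => √(2 * x) :=
    eventually_of_mem (Ioi_mem_nhds hh) fun x hx => mel_eq_Φ_sqrt a b (mem_Ioi.1 hx).le
  refine (hΦ.congr_of_eventuallyEq heq).congr_deriv ?_
  field_simp

end Melnikov

open Melnikov

/-- If `a > 1`, `-(3/2)(a+1)² < b < 0` and `M'` is positive somewhere on `(0,∞)`,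
then `M'` has exactly two zeros `h₁₁ < h₁₂` on `(0,∞)`, being negative on `(0, h₁₁)`,
positive on `(h₁₁, h₁₂)` and negative on `(h₁₂, ∞)`. -/
theorem melnikov_first_deriv_two_zeros (a b : ℝ) (ha : 1 < a)
    (hb1 : -(3 / 2) * (a + 1) ^ 2 < b) (hb2 : b < 0)
    (hpos : ∃ hbar : ℝ, 0 < hbar ∧ 0 < deriv (Mel a b) hbar) :
    ∃ h₁₁ h₁₂ : ℝ, 0 < h₁₁ ∧ h₁₁ < h₁₂ ∧
      deriv (Mel a b) h₁₁ = 0 ∧ deriv (Mel a b) h₁₂ = 0 ∧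
      (∀ h : ℝ, 0 < h → h < h₁₁ → deriv (Mel a b) h < 0) ∧
      (∀ h : ℝ, h₁₁ < h → h < h₁₂ → 0 < deriv (Mel a b) h) ∧
      (∀ h : ℝ, h₁₂ < h → deriv (Mel a b) h < 0) := by
  have hderiv {h : ℝ} (hh : 0 < h) : deriv (Mel a b) h = F a b √(2 * h) :=
    (hasDerivAt_mel ha hh).deriv
  have hsqrt {z : ℝ} (hz : 0 ≤ z) : √(2 * (z ^ 2 / 2)) = z := by
    rw [mul_div_cancel₀ _ two_ne_zero, sqrt_sq hz]
  have hmono {h h' : ℝ} (hh : 0 ≤ h) (hlt : h < h') : √(2 * h) < √(2 * h') :=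
    sqrt_lt_sqrt (by positivity) (by linarith)
  obtain ⟨hbar, hbar₀, hMbar⟩ := hpos
  rw [hderiv hbar₀] at hMbar
  obtain ⟨z₁, z₂, hz₁, hz₁₂, hF₁, hF₂, hneg₁, hpos₁₂, hneg₂⟩ :=
    (strictConcaveOn_F ha hb1 hb2.le).exists_two_zeros
      (continuous_F a b).continuousOn (F_zero_neg hb1)
      (sqrt_pos.2 (by positivity)) hMbar (lt_add_of_pos_right _ (by linarith : 0 < 2 * (a + 1)))
      (F_neg_of_two_mul_add_one_le ha hb1 (le_add_of_nonneg_left (sqrt_nonneg _)))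
  have hz₂ : 0 < z₂ := hz₁.trans hz₁₂
  have hh₁ : 0 < z₁ ^ 2 / 2 := by positivity
  have hh₂ : 0 < z₂ ^ 2 / 2 := by positivity
  refine ⟨z₁ ^ 2 / 2, z₂ ^ 2 / 2, hh₁, by gcongr, ?_, ?_, ?_, ?_, ?_⟩
  · rw [hderiv hh₁, hsqrt hz₁.le, hF₁]
  · rw [hderiv hh₂, hsqrt hz₂.le, hF₂]
  · intro h hh hlt
    rw [hderiv hh]
    exact hneg₁ _ (sqrt_nonneg _) (hsqrt hz₁.le ▸ hmono hh.le hlt)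
  · intro h hlt₁ hlt₂
    rw [hderiv (hh₁.trans hlt₁)]
    exact hpos₁₂ _ (hsqrt hz₁.le ▸ hmono hh₁.le hlt₁)
      (hsqrt hz₂.le ▸ hmono (hh₁.trans hlt₁).le hlt₂)
  · intro h hlt
    rw [hderiv (hh₂.trans hlt)]
    exact hneg₂ _ (hsqrt hz₂.le ▸ hmono hh₂.le hlt)
end

section
/- Let a > 1, δ > 0 and b ≥ 0. Then the system ẋ = y - δ(x³/3 + b·x), ẏ = -(x - sgn(x) - a) has no nonconstant periodic solution; that is, every solution (x, y) that is periodic of some period T > 0 is constant. -/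
/-!
The system is in Liénard form `ẋ = y - F x`, `ẏ = -G' x` with `F x = δ (x³/3 + b x)` and
`G x = x²/2 - |x| - a x`. Along a solution, `u = y - F x` is `ẋ`, and the energy
`E = u²/2 + G x` satisfies `Ė = -δ (x² + b) u² ≤ 0` wherever `x ≠ 0`. Zeros of `x` with `u ≠ 0`
are isolated, and `E = 0` wherever `x = u = 0`, so `E` is nonincreasing on all of `ℝ`.
On a periodic solution `E` is therefore constant, which forces `u = 0` where `x ≠ 0`, and then
everywhere; so `x` is constant, and so is `y = F x`.
-/

open Set Filter Topology

theorem le_of_hasDerivAt_nonpos_off_finite {f f' : ℝ → ℝ} {S : Set ℝ} (hS : S.Finite)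
    {p q : ℝ} (hpq : p ≤ q) (hf : ContinuousOn f (Icc p q))
    (hf' : ∀ t ∈ Ioo p q \ S, HasDerivAt f (f' t) t) (hf'₀ : ∀ t ∈ Ioo p q \ S, f' t ≤ 0) :
    f q ≤ f p := by
  induction S, hS using Set.Finite.induction_on generalizing p q with
  | empty =>
    have hanti : AntitoneOn f (Icc p q) := by
      refine antitoneOn_of_hasDerivWithinAt_nonpos (f' := f') (convex_Icc p q) hf
        (fun t ht ↦ ?_) ?_
      · rw [interior_Icc] at ht ⊢
        exact (hf' t ⟨ht, notMem_empty t⟩).hasDerivWithinAt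
      · simpa [interior_Icc] using hf'₀
    exact hanti (left_mem_Icc.2 hpq) (right_mem_Icc.2 hpq) hpq
  | @insert c S _ _ ih =>
    by_cases hc : c ∈ Ioo p q
    · have hqc : f q ≤ f c := ih hc.2.le (hf.mono (Icc_subset_Icc_left hc.1.le))
        (fun t ht ↦ hf' t ⟨⟨hc.1.trans ht.1.1, ht.1.2⟩, by simp [ht.2, ht.1.1.ne']⟩)
        (fun t ht ↦ hf'₀ t ⟨⟨hc.1.trans ht.1.1, ht.1.2⟩, by simp [ht.2, ht.1.1.ne']⟩)
      have hcp : f c ≤ f p := ih hc.1.le (hf.mono (Icc_subset_Icc_right hc.2.le))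
        (fun t ht ↦ hf' t ⟨⟨ht.1.1, ht.1.2.trans hc.2⟩, by simp [ht.2, ht.1.2.ne]⟩)
        (fun t ht ↦ hf'₀ t ⟨⟨ht.1.1, ht.1.2.trans hc.2⟩, by simp [ht.2, ht.1.2.ne]⟩)
      exact hqc.trans hcp
    · have hsub : Ioo p q \ S ⊆ Ioo p q \ insert c S := fun t ht ↦
        ⟨ht.1, by rintro (rfl | h); exacts [hc ht.1, ht.2 h]⟩
      exact ih hpq hf (fun t ht ↦ hf' t (hsub ht)) (fun t ht ↦ hf'₀ t (hsub ht))

theorem le_of_hasDerivAt_nonpos_off_discrete {f f' : ℝ → ℝ} (hf : Continuous f) {Z : Set ℝ}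
    (hZ : IsClosed Z) {w v : ℝ} (hwv : w ≤ v)
    (hZ_isolated : ∀ z ∈ Z ∩ Ioo w v, ∀ᶠ s in 𝓝[≠] z, s ∉ Z)
    (hf' : ∀ t ∈ Ioo w v \ Z, HasDerivAt f (f' t) t) (hf'₀ : ∀ t ∈ Ioo w v \ Z, f' t ≤ 0) :
    f v ≤ f w := by
  rcases hwv.eq_or_lt with rfl | hwv
  · rfl
  have hinner : ∀ w' ∈ Ioo w v, ∀ v' ∈ Ioo w v, w' ≤ v' → f v' ≤ f w' := by
    intro w' hw' v' hv' hwv'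
    have hsub : Icc w' v' ⊆ Ioo w v := Icc_subset_Ioo hw'.1 hv'.2
    have hfin : (Z ∩ Icc w' v').Finite := by
      refine (isCompact_Icc.inter_left hZ).finite (isDiscrete_iff_nhdsNE.2 fun z hz ↦ ?_)
      refine inf_principal_eq_bot.2 ?_
      filter_upwards [hZ_isolated z ⟨hz.1, hsub hz.2⟩] with s hs hs'
      exact hs hs'.1
    have hmem : ∀ t ∈ Ioo w' v' \ (Z ∩ Icc w' v'), t ∈ Ioo w v \ Z := fun t ht ↦
      ⟨hsub (Ioo_subset_Icc_self ht.1), fun htZ ↦ ht.2 ⟨htZ, Ioo_subset_Icc_self ht.1⟩⟩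
    exact le_of_hasDerivAt_nonpos_off_finite hfin hwv' hf.continuousOn
      (fun t ht ↦ hf' t (hmem t ht)) (fun t ht ↦ hf'₀ t (hmem t ht))
  have hright : ∀ w' ∈ Ioo w v, f v ≤ f w' := fun w' hw' ↦
    le_of_tendsto (hf.continuousAt.continuousWithinAt (s := Iio v)) <|
      eventually_of_mem (Ioo_mem_nhdsLT hw'.2) fun v' hv' ↦
        hinner w' hw' v' ⟨hw'.1.trans hv'.1, hv'.2⟩ hv'.1.le
  exact ge_of_tendsto (hf.continuousAt.continuousWithinAt (s := Ioi w))
    (eventually_of_mem (Ioo_mem_nhdsGT hwv) hright)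

theorem antitone_of_le_across_gaps {f : ℝ → ℝ} {C : Set ℝ} (hC : IsClosed C) {m : ℝ}
    (hfC : ∀ c ∈ C, f c = m) (hgap : ∀ w v, w ≤ v → (∀ s ∈ Ioo w v, s ∉ C) → f v ≤ f w) :
    Antitone f := by
  intro w v hwv
  by_cases hC' : ∀ s ∈ Ioo w v, s ∉ C
  · exact hgap w v hwv hC'
  push Not at hC'
  obtain ⟨c, hc, hcC⟩ := hC'
  set K := C ∩ Icc w v
  have hK : IsCompact K := isCompact_Icc.inter_left hC
  have hKne : K.Nonempty := ⟨c, hcC, Ioo_subset_Icc_self hc⟩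
  obtain ⟨hinfC, hinfI⟩ := hK.sInf_mem hKne
  obtain ⟨hsupC, hsupI⟩ := hK.sSup_mem hKne
  have hleft : f (sInf K) ≤ f w := hgap w _ hinfI.1 fun s hs hsC ↦
    hs.2.not_ge (csInf_le hK.bddBelow ⟨hsC, hs.1.le, hs.2.le.trans hinfI.2⟩)
  have hright : f v ≤ f (sSup K) := hgap _ v hsupI.2 fun s hs hsC ↦
    hs.1.not_ge (le_csSup hK.bddAbove ⟨hsC, hsupI.1.trans hs.1.le, hs.2.le⟩)
  rw [hfC _ hinfC] at hleft
  rw [hfC _ hsupC] at hright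
  exact hright.trans hleft

theorem Function.Periodic.eq_of_antitone {α : Type*} [PartialOrder α] {f : ℝ → α} {T : ℝ}
    (hper : Function.Periodic f T) (hT : 0 < T) (hf : Antitone f) (s t : ℝ) : f s = f t := by
  wlog hst : s ≤ t generalizing s t
  · exact (this t s (le_of_not_ge hst)).symm
  obtain ⟨n, hn⟩ := exists_nat_gt ((t - s) / T)
  have hle : t ≤ s + n * T := by
    rw [div_lt_iff₀ hT] at hn
    linarith
  refine le_antisymm ?_ (hf hst)
  calc f s = f (s + n * T) := (hper.nat_mul n s).symm
    _ ≤ f t := hf hle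

noncomputable def lienardEnergy (F G : ℝ → ℝ) (p q : ℝ) : ℝ := (q - F p) ^ 2 / 2 + G p

theorem hasDerivAt_lienardEnergy {F G x y : ℝ → ℝ} {t f g : ℝ}
    (hx : HasDerivAt x (y t - F (x t)) t) (hy : HasDerivAt y (-g) t)
    (hF : HasDerivAt F f (x t)) (hG : HasDerivAt G g (x t)) :
    HasDerivAt (fun s ↦ lienardEnergy F G (x s) (y s)) (-(f * (y t - F (x t)) ^ 2)) t := by
  have hu := hy.sub (hF.comp t hx)
  exact (((hu.pow 2).div_const 2).add (hG.comp t hx)).congr_deriv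
    (by simp only [Pi.sub_apply, Function.comp_apply]; push_cast; ring)

noncomputable def damping (b δ p : ℝ) : ℝ := δ * (p ^ 3 / 3 + b * p)

noncomputable def potential (a p : ℝ) : ℝ := p ^ 2 / 2 - |p| - a * p

theorem hasDerivAt_damping (b δ p : ℝ) : HasDerivAt (damping b δ) (δ * (p ^ 2 + b)) p :=
  ((((hasDerivAt_pow 3 p).div_const 3).add ((hasDerivAt_id p).const_mul b)).const_mul
    δ).congr_deriv (by push_cast; ring)

theorem hasDerivAt_potential (a : ℝ) {p : ℝ} (hp : p ≠ 0) :
    HasDerivAt (potential a) (p - Real.sign p - a) p := by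
  have habs : HasDerivAt (|·|) (Real.sign p) p := by
    rcases hp.lt_or_gt with hp | hp
    · simpa [Real.sign_of_neg hp] using hasDerivAt_abs_neg hp
    · simpa [Real.sign_of_pos hp] using hasDerivAt_abs_pos hp
  exact ((((hasDerivAt_pow 2 p).div_const 2).sub habs).sub
    ((hasDerivAt_id p).const_mul a)).congr_deriv (by push_cast; ring)

section Solution

variable {a b δ : ℝ} {x y : ℝ → ℝ}

theorem hasDerivAt_energy {t : ℝ} (hx : HasDerivAt x (y t - damping b δ (x t)) t)
    (hy : HasDerivAt y (-(x t - Real.sign (x t) - a)) t) (hxt : x t ≠ 0) :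
    HasDerivAt (fun s ↦ lienardEnergy (damping b δ) (potential a) (x s) (y s))
      (-(δ * (x t ^ 2 + b) * (y t - damping b δ (x t)) ^ 2)) t :=
  hasDerivAt_lienardEnergy hx hy (hasDerivAt_damping b δ (x t)) (hasDerivAt_potential a hxt)

theorem antitone_energy (hδ : 0 ≤ δ) (hb : 0 ≤ b) (hyc : Continuous y)
    (hx : ∀ t, HasDerivAt x (y t - damping b δ (x t)) t)
    (hy : ∀ t, x t ≠ 0 → HasDerivAt y (-(x t - Real.sign (x t) - a)) t) :
    Antitone fun t ↦ lienardEnergy (damping b δ) (potential a) (x t) (y t) := by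
  set u := fun t ↦ y t - damping b δ (x t)
  have hxc : Continuous x := continuous_iff_continuousAt.2 fun t ↦ (hx t).continuousAt
  have huc : Continuous u := hyc.sub (continuous_const.mul (by fun_prop))
  refine antitone_of_le_across_gaps (C := {t | x t = 0 ∧ u t = 0}) (m := 0)
    ((isClosed_eq hxc continuous_const).inter (isClosed_eq huc continuous_const))
    (fun c ⟨hx0, hu0⟩ ↦ ?_) fun w v hwv hgap ↦ ?_
  · change u c ^ 2 / 2 + potential a (x c) = 0
    simp [hx0, hu0, potential]
  have hEc : Continuous fun t ↦ lienardEnergy (damping b δ) (potential a) (x t) (y t) :=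
    ((huc.pow 2).div_const 2).add (by unfold potential; fun_prop)
  refine le_of_hasDerivAt_nonpos_off_discrete hEc (Z := {t | x t = 0})
    (isClosed_eq hxc continuous_const) hwv (fun z ⟨hz, hzI⟩ ↦ ?_)
    (fun t ht ↦ hasDerivAt_energy (hx t) (hy t ht.2) ht.2) fun t _ ↦ ?_
  · exact (hx z).eventually_ne (c := 0) fun hu ↦ hgap z hzI ⟨hz, hu⟩
  · exact neg_nonpos.2 (mul_nonneg (mul_nonneg hδ (by positivity)) (sq_nonneg _))

theorem eq_damping_of_energy_const (hδ : 0 < δ) (hb : 0 ≤ b) (hyc : Continuous y)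
    (hx : ∀ t, HasDerivAt x (y t - damping b δ (x t)) t)
    (hy : ∀ t, x t ≠ 0 → HasDerivAt y (-(x t - Real.sign (x t) - a)) t)
    (hE : ∀ s t, lienardEnergy (damping b δ) (potential a) (x s) (y s) =
      lienardEnergy (damping b δ) (potential a) (x t) (y t)) (t : ℝ) :
    y t = damping b δ (x t) := by
  set u := fun t ↦ y t - damping b δ (x t)
  have hxc : Continuous x := continuous_iff_continuousAt.2 fun t ↦ (hx t).continuousAt
  have huc : Continuous u := hyc.sub (continuous_const.mul (by fun_prop))
  have hoff : ∀ t, x t ≠ 0 → u t = 0 := by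
    intro t hxt
    have hpos : 0 < δ * (x t ^ 2 + b) := mul_pos hδ (by positivity)
    have h0 := (hasDerivAt_energy (hx t) (hy t hxt) hxt).unique
      ((hasDerivAt_const t _).congr_of_eventuallyEq (Eventually.of_forall fun s ↦ hE s t))
    simpa [hpos.ne'] using h0
  -- If `u t ≠ 0`, then `u ≠ 0` near `t`, so `x ≡ 0` near `t` by `hoff`, and `u t = ẋ t = 0`.
  refine sub_eq_zero.1 (by_contra fun hut ↦ hut ?_)
  have hx0 : x =ᶠ[𝓝 t] fun _ ↦ 0 :=
    (huc.continuousAt.eventually_ne hut).mono fun s hs ↦ not_imp_comm.1 (hoff s) hs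
  exact (hx t).unique ((hasDerivAt_const t 0).congr_of_eventuallyEq hx0)

end Solution

theorem no_closed_orbit_of_nonneg_b_general (a b δ : ℝ) (hδ : 0 < δ) (hb : 0 ≤ b)
    (x y : ℝ → ℝ) (hyc : Continuous y)
    (hx : ∀ t : ℝ, HasDerivAt x (y t - δ * ((x t) ^ 3 / 3 + b * x t)) t)
    (hy : ∀ t : ℝ, x t ≠ 0 → HasDerivAt y (-(x t - Real.sign (x t) - a)) t)
    (T : ℝ) (hT : 0 < T)
    (hper : ∀ t : ℝ, x (t + T) = x t ∧ y (t + T) = y t) :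
    ∃ cx cy : ℝ, ∀ t : ℝ, x t = cx ∧ y t = cy := by
  have hE := antitone_energy hδ.le hb hyc hx hy
  have hEper : Function.Periodic
      (fun t ↦ lienardEnergy (damping b δ) (potential a) (x t) (y t)) T := fun t ↦ by
    simp only [(hper t).1, (hper t).2]
  have hy_eq := eq_damping_of_energy_const hδ hb hyc hx hy (hEper.eq_of_antitone hT hE)
  have hx' : ∀ t, HasDerivAt x 0 t := fun t ↦ (hx t).congr_deriv (sub_eq_zero.2 (hy_eq t))
  have hx_const : ∀ t, x t = x 0 := fun t ↦
    is_const_of_deriv_eq_zero (fun s ↦ (hx' s).differentiableAt) (fun s ↦ (hx' s).deriv) t 0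
  exact ⟨x 0, y 0, fun t ↦ ⟨hx_const t, by rw [hy_eq t, hy_eq 0, hx_const t]⟩⟩

/-- For `a > 1`, `δ > 0`, `b ≥ 0`, the system `ẋ = y - δ(x³/3 + bx)`,
`ẏ = -(x - sgn x - a)` has no nonconstant periodic solution. -/
theorem no_closed_orbit_of_nonneg_b (a b δ : ℝ) (ha : 1 < a) (hδ : 0 < δ) (hb : 0 ≤ b)
    (x y : ℝ → ℝ) (hxc : Continuous x) (hyc : Continuous y)
    (hx : ∀ t : ℝ, HasDerivAt x (y t - δ * ((x t) ^ 3 / 3 + b * x t)) t)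
    (hy : ∀ t : ℝ, x t ≠ 0 → HasDerivAt y (-(x t - Real.sign (x t) - a)) t)
    (T : ℝ) (hT : 0 < T)
    (hper : ∀ t : ℝ, x (t + T) = x t ∧ y (t + T) = y t) :
    ∃ cx cy : ℝ, ∀ t : ℝ, x t = cx ∧ y t = cy :=
  no_closed_orbit_of_nonneg_b_general a b δ hδ hb x y hyc hx hy T hT hper
end

section
/- Let a > 1, δ > 0 and b ≤ -4(a+1)²/3. Then the system ẋ = y - δ(x³/3 + b·x), ẏ = -(x - 1 - a) has no nonconstant periodic solution whose first component stays positive; that is, every pair of differentiable functions x, y : ℝ → ℝ with x(t) > 0 for all t, x′(t) = y(t) - δ(x(t)³/3 + b·x(t)) and y′(t) = -(x(t) - 1 - a) for all t, which is periodic of some period T > 0, is constant. -/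
/-!
Moving the equilibrium `(s, δ F s)`, `s = 1 + a`, `F x = x³/3 + b x`, to the origin gives the
Liénard system `u' = Y - f u`, `Y' = -u` with `f v = δ (F (s + v) - F s)`, on `u > -s`. The
bound on `b` makes `f` decreasing on `[-s, s/7]` and `f v < f (-v)` for `0 < v < s`.

An orbit through the equilibrium stays there: near it the energy `u² + Y²` is nondecreasing
(`u f u ≤ 0`), so it vanishes before any time where it vanishes, hence everywhere by periodicity.
Otherwise, starting from the top of the orbit, it makes a half-loop in `u > 0` and then one in
`u < 0`. Writing them as graphs `u = r Y` and `u = -l Y`, the function `W = l² - r²` satisfies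
`dW/dY = 2 (f (-l) - f r)`, which is positive wherever `W = 0` and nonnegative near the bottom,
where both branches are small. So the left half-loop lies strictly outside the right one and the
orbit returns strictly above the top, a contradiction.
-/

open Set Filter Topology Function

section RealFunctions

variable {g g' : ℝ → ℝ} {d p q t₀ : ℝ}

theorem eventually_pos_right_of_hasDerivAt (hg : HasDerivAt g d t₀) (h₀ : g t₀ = 0)
    (hd : 0 < d) : ∀ᶠ t in 𝓝[>] t₀, 0 < g t := by
  have hslope := (hasDerivAt_iff_tendsto_slope.1 hg).eventually (eventually_gt_nhds hd)
  filter_upwards [nhdsGT_le_nhdsNE t₀ hslope, self_mem_nhdsWithin] with t ht ht₀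
  exact pos_of_slope_pos ht₀ ht h₀

theorem eventually_neg_left_of_hasDerivAt (hg : HasDerivAt g d t₀) (h₀ : g t₀ = 0)
    (hd : 0 < d) : ∀ᶠ t in 𝓝[<] t₀, g t < 0 := by
  have hslope := (hasDerivAt_iff_tendsto_slope.1 hg).eventually (eventually_gt_nhds hd)
  filter_upwards [nhdsLT_le_nhdsNE t₀ hslope, self_mem_nhdsWithin] with t ht ht₀
  exact neg_of_slope_pos ht₀ ht h₀

theorem exists_first_zero_of_eventually_pos (hg : Continuous g) (hpq : p < q)
    (hp : ∀ᶠ t in 𝓝[>] p, 0 < g t) (hq : g q ≤ 0) :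
    ∃ r ∈ Ioc p q, g r = 0 ∧ ∀ t ∈ Ioo p r, 0 < g t := by
  obtain ⟨e, he, hpe⟩ := mem_nhdsGT_iff_exists_Ioo_subset.1 hp
  obtain ⟨p₁, hpp₁, hp₁⟩ := exists_between (lt_min he hpq)
  have hgp₁ : 0 < g p₁ := hpe ⟨hpp₁, hp₁.trans_le (min_le_left _ _)⟩
  have hp₁q : p₁ ≤ q := hp₁.le.trans (min_le_right _ _)
  obtain ⟨r, ⟨hr, hgr : g r ≤ 0⟩, hleast⟩ :=
    (isCompact_Icc.inter_right (isClosed_Iic.preimage hg)).exists_isLeast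
      (⟨q, right_mem_Icc.2 hp₁q, hq⟩ : (Icc p₁ q ∩ g ⁻¹' Iic 0).Nonempty)
  have hbefore : ∀ t ∈ Ico p₁ r, 0 < g t := fun t ht =>
    not_le.1 fun hgt => ht.2.not_ge (hleast ⟨⟨ht.1, ht.2.le.trans hr.2⟩, hgt⟩)
  have hp₁r : p₁ < r := lt_of_le_of_ne hr.1 (by rintro rfl; exact hgr.not_gt hgp₁)
  obtain ⟨ζ, hζ, hgζ⟩ := intermediate_value_Icc' hr.1 hg.continuousOn ⟨hgr, hgp₁.le⟩
  have hζr : ζ = r := le_antisymm hζ.2 (hleast ⟨⟨hζ.1, hζ.2.trans hr.2⟩, hgζ.le⟩)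
  refine ⟨r, ⟨hpp₁.trans hp₁r, hr.2⟩, hζr ▸ hgζ, fun t ht => ?_⟩
  rcases lt_or_ge t p₁ with htp₁ | htp₁
  · exact hpe ⟨ht.1, htp₁.trans (hp₁.trans_le (min_le_left _ _))⟩
  · exact hbefore t ⟨htp₁, ht.2⟩

theorem nonneg_of_hasDerivAt_pos_at_zeros (hpq : p < q) (hg : ContinuousOn g (Icc p q))
    (hg' : ∀ t ∈ Ioo p q, HasDerivAt g (g' t) t) (hgp : g p = 0)
    (hstart : ∀ᶠ t in 𝓝[>] p, 0 ≤ g' t) (hzeros : ∀ t ∈ Ioo p q, g t = 0 → 0 < g' t) :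
    ∀ t ∈ Icc p q, 0 ≤ g t := by
  obtain ⟨e, he, hpe⟩ := mem_nhdsGT_iff_exists_Ioo_subset.1 hstart
  obtain ⟨p₁, hpp₁, hp₁⟩ := exists_between (lt_min he hpq)
  have hp₁e : p₁ < e := hp₁.trans_le (min_le_left _ _)
  have hp₁q : p₁ < q := hp₁.trans_le (min_le_right _ _)
  have hmono : MonotoneOn g (Icc p p₁) := by
    refine monotoneOn_of_deriv_nonneg (convex_Icc _ _)
      (hg.mono (Icc_subset_Icc_right hp₁q.le)) (fun t ht => ?_) fun t ht => ?_ <;>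
      rw [interior_Icc] at ht
    · exact (hg' t ⟨ht.1, ht.2.trans hp₁q⟩).differentiableAt.differentiableWithinAt
    · rw [(hg' t ⟨ht.1, ht.2.trans hp₁q⟩).deriv]
      exact hpe ⟨ht.1, ht.2.trans hp₁e⟩
  have hinit : ∀ t ∈ Icc p p₁, 0 ≤ g t := fun t ht =>
    hgp ▸ hmono (left_mem_Icc.2 hpp₁.le) ht ht.1
  have hlate : ∀ t ∈ Icc p₁ q, 0 ≤ g t :=
    image_le_of_deriv_right_lt_deriv_boundary' continuousOn_const
      (fun t _ => hasDerivWithinAt_const t _ 0) (hinit p₁ (right_mem_Icc.2 hpp₁.le))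
      (hg.mono (Icc_subset_Icc_left hpp₁.le))
      (fun t ht => (hg' t ⟨hpp₁.trans_le ht.1, ht.2⟩).hasDerivWithinAt)
      fun t ht h0 => hzeros t ⟨hpp₁.trans_le ht.1, ht.2⟩ h0.symm
  intro t ht
  rcases le_total t p₁ with htp₁ | htp₁
  · exact hinit t ⟨ht.1, htp₁⟩
  · exact hlate t ⟨htp₁, ht.2⟩

theorem eq_zero_of_le_of_deriv_nonneg_near_zero {κ : ℝ} (hg : ∀ t, HasDerivAt g (g' t) t)
    (hnonneg : ∀ t, 0 ≤ g t) (hκ : 0 < κ) (hg' : ∀ t, g t < κ → 0 ≤ g' t)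
    (h₀ : g t₀ = 0) : ∀ t ≤ t₀, g t = 0 := by
  intro t ht
  by_contra hne
  have hgt : 0 < g t := (hnonneg t).lt_of_ne' hne
  have hcont : Continuous g := continuous_iff_continuousAt.2 fun t => (hg t).continuousAt
  set κ' := min κ (g t)
  obtain ⟨τ, ⟨hτ, hgτ : κ' ≤ g τ⟩, hlast⟩ :=
    (isCompact_Icc.inter_right (isClosed_Ici.preimage hcont)).exists_isGreatest
      (⟨t, left_mem_Icc.2 ht, (min_le_right _ _ : κ' ≤ g t)⟩ :
        (Icc t t₀ ∩ g ⁻¹' Ici κ').Nonempty)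
  have hsmall : ∀ r ∈ Ioc τ t₀, g r < κ' := fun r hr =>
    not_le.1 fun h => hr.1.not_ge (hlast ⟨⟨hτ.1.trans hr.1.le, hr.2⟩, h⟩)
  have hmono : MonotoneOn g (Icc τ t₀) := by
    refine monotoneOn_of_deriv_nonneg (convex_Icc _ _) hcont.continuousOn
      (fun r _ => (hg r).differentiableAt.differentiableWithinAt) fun r hr => ?_
    rw [interior_Icc] at hr
    rw [(hg r).deriv]
    exact hg' r ((hsmall r ⟨hr.1, hr.2.le⟩).trans_le (min_le_left _ _))
  have hle := hmono (left_mem_Icc.2 hτ.2) (right_mem_Icc.2 hτ.2) hτ.2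
  have hκ' : 0 < κ' := lt_min hκ hgt
  linarith

theorem StrictAntiOn.exists_continuous_inverse {φ : ℝ → ℝ} (hpq : p ≤ q)
    (hφ : StrictAntiOn φ (Icc p q)) (hc : ContinuousOn φ (Icc p q)) :
    ∃ ψ : ℝ → ℝ, Continuous ψ ∧ (∀ t ∈ Icc p q, ψ (φ t) = t) ∧
      ∀ η ∈ Icc (φ q) (φ p), ψ η ∈ Icc p q ∧ φ (ψ η) = η := by
  have hmono : StrictMonoOn (fun t => -φ t) (Icc p q) := fun a ha b hb hab =>
    neg_lt_neg (hφ ha hb hab)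
  have himage : (fun t => -φ t) '' Icc p q = Icc (-φ p) (-φ q) := by
    refine Subset.antisymm ?_ (intermediate_value_Icc hpq hc.neg)
    rintro _ ⟨t, ht, rfl⟩
    exact ⟨hmono.monotoneOn (left_mem_Icc.2 hpq) ht ht.1,
      hmono.monotoneOn ht (right_mem_Icc.2 hpq) ht.2⟩
  let e : Icc p q ≃o Icc (-φ p) (-φ q) :=
    (hmono.orderIso _ _).trans (OrderIso.setCongr _ _ himage)
  have he : ∀ z, (e z : ℝ) = -φ z := fun _ => rfl
  have hle : -φ p ≤ -φ q := hmono.monotoneOn (left_mem_Icc.2 hpq) (right_mem_Icc.2 hpq) hpq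
  refine ⟨fun η => e.symm (projIcc _ _ hle (-η)),
    continuous_subtype_val.comp (e.symm.continuous.comp (continuous_projIcc.comp continuous_neg)),
    fun t ht => ?_, fun η hη => ⟨(e.symm _).2, ?_⟩⟩
  · have : projIcc _ _ hle (-φ t) = e ⟨t, ht⟩ := by
      ext; rw [he, projIcc_of_mem hle (himage ▸ mem_image_of_mem _ ht)]
    simp [this]
  · have := he (e.symm (projIcc _ _ hle (-η)))
    rw [e.apply_symm_apply, projIcc_of_mem hle ⟨neg_le_neg hη.2, neg_le_neg hη.1⟩] at this
    simp only [projIcc_of_mem hle ⟨neg_le_neg hη.2, neg_le_neg hη.1⟩]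
    linarith

end RealFunctions

theorem sq_lt_sq_of_branches {f l r : ℝ → ℝ} {p q s ρ : ℝ} (hρ : 0 < ρ)
    (hfle : ∀ v w, 0 ≤ v → v < s → 0 ≤ w → w ≤ max v ρ → f w ≤ f (-v))
    (hflt : ∀ v, 0 < v → v < s → f v < f (-v)) (hpq : p < q)
    (hl : Continuous l) (hr : Continuous r) (hlp : l p = 0) (hrp : r p = 0)
    (hlv : ∀ η ∈ Ioo p q, 0 < l η ∧ l η < s) (hrv : ∀ η ∈ Ioo p q, 0 ≤ r η)
    (hl' : ∀ η ∈ Ioo p q, HasDerivAt (fun η => l η ^ 2) (-2 * (η - f (-l η))) η)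
    (hr' : ∀ η ∈ Ioo p q, HasDerivAt (fun η => r η ^ 2) (-2 * (η - f (r η))) η) :
    r q ^ 2 < l q ^ 2 := by
  set W : ℝ → ℝ := fun η => l η ^ 2 - r η ^ 2
  set G : ℝ → ℝ := fun η => 2 * (f (-l η) - f (r η))
  have hW : ∀ η ∈ Ioo p q, HasDerivAt W (G η) η := fun η hη =>
    ((hl' η hη).sub (hr' η hη)).congr_deriv (by ring)
  have hG : ∀ η ∈ Ioo p q, r η ≤ max (l η) ρ → 0 ≤ G η := fun η hη hη' => by
    have := hfle (l η) (r η) (hlv η hη).1.le (hlv η hη).2 (hrv η hη) hη'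
    simp only [G]
    linarith
  have hGW : ∀ η ∈ Ioo p q, 0 ≤ W η → 0 ≤ G η := fun η hη hWη =>
    hG η hη (((sq_le_sq₀ (hrv η hη) (hlv η hη).1.le).1 (sub_nonneg.1 hWη)).trans
      (le_max_left _ _))
  have hGpos : ∀ η ∈ Ioo p q, W η = 0 → 0 < G η := fun η hη hWη => by
    have hrl : r η = l η :=
      (sq_eq_sq₀ (hrv η hη) (hlv η hη).1.le).1 (sub_eq_zero.1 hWη).symm
    have := hflt (l η) (hlv η hη).1 (hlv η hη).2
    simp only [G, hrl]
    linarith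
  have hstart : ∀ᶠ η in 𝓝[>] p, 0 ≤ G η := by
    have hsmall : ∀ᶠ η in 𝓝 p, r η < ρ :=
      hr.continuousAt.eventually_lt continuousAt_const (hrp ▸ hρ)
    filter_upwards [nhdsWithin_le_nhds hsmall, Ioo_mem_nhdsGT hpq] with η hη hηpq
    exact hG η hηpq (hη.le.trans (le_max_right _ _))
  have hWc : Continuous W := by fun_prop
  have hWnonneg := nonneg_of_hasDerivAt_pos_at_zeros hpq hWc.continuousOn hW
    (by simp [W, hlp, hrp]) hstart hGpos
  have hWpos : ∀ η ∈ Ioo p q, 0 < W η := fun η hη => by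
    refine (hWnonneg η (Ioo_subset_Icc_self hη)).lt_of_ne' fun hWη => ?_
    obtain ⟨ζ, hζneg, hζ⟩ := ((eventually_neg_left_of_hasDerivAt (hW η hη) hWη
      (hGpos η hη hWη)).and (Ioo_mem_nhdsLT hη.1)).exists
    exact hζneg.not_ge (hWnonneg ζ ⟨hζ.1.le, hζ.2.le.trans hη.2.le⟩)
  have hmono : MonotoneOn W (Icc p q) := by
    refine monotoneOn_of_deriv_nonneg (convex_Icc _ _) hWc.continuousOn
      (fun η hη => ?_) fun η hη => ?_ <;> rw [interior_Icc] at hη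
    · exact (hW η hη).differentiableAt.differentiableWithinAt
    · rw [(hW η hη).deriv]
      exact hGW η hη (hWpos η hη).le
  have hmid : (p + q) / 2 ∈ Ioo p q := ⟨by linarith, by linarith⟩
  have hle := hmono (Ioo_subset_Icc_self hmid) (right_mem_Icc.2 hpq.le) hmid.2.le
  have hWmid := hWpos _ hmid
  simp only [W] at hle hWmid ⊢
  linarith

noncomputable def dampingIncrement (s b v : ℝ) : ℝ :=
  ((s + v) ^ 3 / 3 + b * (s + v)) - (s ^ 3 / 3 + b * s)

section Damping

variable {s b : ℝ}

@[simp]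
theorem dampingIncrement_zero : dampingIncrement s b 0 = 0 := by
  simp [dampingIncrement]

-- `s / 7` works since `(8 / 7)² < 4 / 3`: the slope `(s + v)² + b` is negative on `[-s, s / 7]`.
theorem dampingIncrement_antitoneOn (hb : b ≤ -4 * s ^ 2 / 3) :
    AntitoneOn (dampingIncrement s b) (Icc (-s) (s / 7)) := by
  intro v hv w hw hvw
  have key : dampingIncrement s b w - dampingIncrement s b v =
      (w - v) * (((w + s) ^ 2 + (w + s) * (v + s) + (v + s) ^ 2) / 3 + b) := by
    unfold dampingIncrement; ring
  have hv₀ : 0 ≤ v + s := by linarith [hv.1]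
  have hw₀ : 0 ≤ w + s := by linarith [hw.1]
  have hbracket : ((w + s) ^ 2 + (w + s) * (v + s) + (v + s) ^ 2) / 3 + b ≤ 0 := by
    nlinarith [mul_le_mul hw.2 hv.2, hv.2, hw.2]
  nlinarith [mul_nonpos_of_nonneg_of_nonpos (sub_nonneg.2 hvw) hbracket]

theorem dampingIncrement_neg_sub (v : ℝ) :
    dampingIncrement s b (-v) - dampingIncrement s b v =
      2 * v / 3 * (-3 * (s ^ 2 + b) - v ^ 2) := by
  unfold dampingIncrement; ring

theorem dampingIncrement_le_neg (hb : b ≤ -4 * s ^ 2 / 3) {v : ℝ} (hv : 0 ≤ v)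
    (hvs : v ≤ s) :
    dampingIncrement s b v ≤ dampingIncrement s b (-v) := by
  have := dampingIncrement_neg_sub (s := s) (b := b) v
  nlinarith [mul_nonneg hv (sub_nonneg.2 hvs)]

theorem dampingIncrement_lt_neg (hb : b ≤ -4 * s ^ 2 / 3) {v : ℝ} (hv : 0 < v)
    (hvs : v < s) :
    dampingIncrement s b v < dampingIncrement s b (-v) := by
  have := dampingIncrement_neg_sub (s := s) (b := b) v
  nlinarith [mul_pos hv (sub_pos.2 hvs), mul_pos hv hv]

theorem dampingIncrement_le_neg_of_le_max (hb : b ≤ -4 * s ^ 2 / 3) {v w : ℝ} (hv : 0 ≤ v)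
    (hvs : v < s) (hw : 0 ≤ w) (hwv : w ≤ max v (s / 7)) :
    dampingIncrement s b w ≤ dampingIncrement s b (-v) := by
  have hanti := dampingIncrement_antitoneOn hb
  rcases le_or_gt w v with hwv' | hvw
  · calc dampingIncrement s b w ≤ dampingIncrement s b (-w) :=
          dampingIncrement_le_neg hb hw (hwv'.trans hvs.le)
      _ ≤ dampingIncrement s b (-v) :=
          hanti ⟨by linarith, by linarith⟩ ⟨by linarith, by linarith⟩ (neg_le_neg hwv')
  · have hw7 : w ≤ s / 7 := (le_max_iff.1 hwv).resolve_left hvw.not_ge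
    calc dampingIncrement s b w ≤ dampingIncrement s b v :=
          hanti ⟨by linarith, by linarith⟩ ⟨by linarith, hw7⟩ hvw.le
      _ ≤ dampingIncrement s b (-v) := dampingIncrement_le_neg hb hv hvs.le

theorem mul_dampingIncrement_nonpos (hb : b ≤ -4 * s ^ 2 / 3) {v : ℝ} (hv : |v| ≤ s / 7) :
    v * dampingIncrement s b v ≤ 0 := by
  have hanti := dampingIncrement_antitoneOn hb
  have hs : 0 ≤ s := by linarith [abs_nonneg v]
  obtain ⟨hv₁, hv₂⟩ := abs_le.1 hv
  have h0 : (0 : ℝ) ∈ Icc (-s) (s / 7) := ⟨by linarith, by linarith⟩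
  have hvmem : v ∈ Icc (-s) (s / 7) := ⟨by linarith, hv₂⟩
  have hD0 : dampingIncrement s b 0 = 0 := dampingIncrement_zero
  rcases le_total 0 v with h | h
  · exact mul_nonpos_of_nonneg_of_nonpos h (hD0 ▸ hanti h0 hvmem h)
  · exact mul_nonpos_of_nonpos_of_nonneg h (hD0 ▸ hanti hvmem h0 h)

end Damping

structure IsLienardSolution (f u Y : ℝ → ℝ) : Prop where
  hasDerivAt_fst : ∀ t, HasDerivAt u (Y t - f (u t)) t
  hasDerivAt_snd : ∀ t, HasDerivAt Y (-u t) t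

namespace IsLienardSolution

variable {f u Y : ℝ → ℝ} {t₀ t₁ t₂ : ℝ}

-- The reflection `(u, Y) ↦ (-u, -Y)` turns left half-loops into right ones.
theorem neg (h : IsLienardSolution f u Y) :
    IsLienardSolution (fun v => -f (-v)) (fun t => -u t) (fun t => -Y t) where
  hasDerivAt_fst t := (h.hasDerivAt_fst t).neg.congr_deriv (by simp only [neg_neg]; ring)
  hasDerivAt_snd t := (h.hasDerivAt_snd t).neg

theorem continuous_fst (h : IsLienardSolution f u Y) : Continuous u :=
  continuous_iff_continuousAt.2 fun t => (h.hasDerivAt_fst t).continuousAt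

theorem continuous_snd (h : IsLienardSolution f u Y) : Continuous Y :=
  continuous_iff_continuousAt.2 fun t => (h.hasDerivAt_snd t).continuousAt

theorem hasDerivAt_fst_of_eq_zero (h : IsLienardSolution f u Y) (hf : f 0 = 0) {t : ℝ}
    (ht : u t = 0) : HasDerivAt u (Y t) t := by
  simpa [ht, hf] using h.hasDerivAt_fst t

theorem strictAntiOn_snd (h : IsLienardSolution f u Y)
    (hpos : ∀ t ∈ Ioo t₀ t₁, 0 < u t) : StrictAntiOn Y (Icc t₀ t₁) := by
  refine strictAntiOn_of_deriv_neg (convex_Icc _ _) h.continuous_snd.continuousOn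
    fun t ht => ?_
  rw [interior_Icc] at ht
  rw [(h.hasDerivAt_snd t).deriv]
  exact neg_neg_of_pos (hpos t ht)

theorem strictMonoOn_snd (h : IsLienardSolution f u Y)
    (hneg : ∀ t ∈ Ioo t₀ t₁, u t < 0) : StrictMonoOn Y (Icc t₀ t₁) := fun _ ha _ hb hab =>
  neg_lt_neg_iff.1 (h.neg.strictAntiOn_snd (fun t ht => neg_pos.2 (hneg t ht)) ha hb hab)

theorem exists_first_zero_of_pos (h : IsLienardSolution f u Y) (hf : f 0 = 0)
    (hY : ∀ t, u t = 0 → Y t ≠ 0) (ht : t₀ < t₁) (hu₀ : u t₀ = 0) (hY₀ : 0 < Y t₀)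
    (hu₁ : u t₁ = 0) : ∃ r ∈ Ioc t₀ t₁, u r = 0 ∧ (∀ t ∈ Ioo t₀ r, 0 < u t) ∧ Y r < 0 := by
  obtain ⟨r, hr, hur, hpos⟩ := exists_first_zero_of_eventually_pos h.continuous_fst ht
    (eventually_pos_right_of_hasDerivAt (h.hasDerivAt_fst_of_eq_zero hf hu₀) hu₀ hY₀) hu₁.le
  refine ⟨r, hr, hur, hpos, (hY r hur).lt_of_le ?_⟩
  by_contra! hYr
  obtain ⟨t, htneg, ht⟩ := ((eventually_neg_left_of_hasDerivAt
    (h.hasDerivAt_fst_of_eq_zero hf hur) hur hYr).and (Ioo_mem_nhdsLT hr.1)).exists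
  exact htneg.not_gt (hpos t ht)

theorem exists_first_zero_of_neg (h : IsLienardSolution f u Y) (hf : f 0 = 0)
    (hY : ∀ t, u t = 0 → Y t ≠ 0) (ht : t₀ < t₁) (hu₀ : u t₀ = 0) (hY₀ : Y t₀ < 0)
    (hu₁ : u t₁ = 0) : ∃ r ∈ Ioc t₀ t₁, u r = 0 ∧ (∀ t ∈ Ioo t₀ r, u t < 0) ∧ 0 < Y r := by
  obtain ⟨r, hr, hur, hneg, hYr⟩ := h.neg.exists_first_zero_of_pos (by simp [hf])
    (fun t ht => by simpa using hY t (neg_eq_zero.1 ht)) ht (by simp [hu₀]) (by linarith)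
    (by simp [hu₁])
  exact ⟨r, hr, neg_eq_zero.1 hur, fun t ht => neg_pos.1 (hneg t ht), by linarith⟩

theorem exists_half_loops (h : IsLienardSolution f u Y) (hf : f 0 = 0)
    (hY : ∀ t, u t = 0 → Y t ≠ 0) {T : ℝ} (hT : 0 < T) (hpu : Periodic u T)
    (hpY : Periodic Y T) :
    ∃ t₀ t₁ t₂, t₀ < t₁ ∧ t₁ < t₂ ∧ u t₀ = 0 ∧ u t₁ = 0 ∧ u t₂ = 0 ∧
      (∀ t ∈ Ioo t₀ t₁, 0 < u t) ∧ (∀ t ∈ Ioo t₁ t₂, u t < 0) ∧ Y t₂ ≤ Y t₀ := by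
  obtain ⟨_, ⟨t₀, rfl⟩, hmax⟩ :=
    (hpY.compact_of_continuous hT.ne' h.continuous_snd).exists_isGreatest (range_nonempty Y)
  have hmax' : ∀ t, Y t ≤ Y t₀ := fun t => hmax ⟨t, rfl⟩
  have hu₀ : u t₀ = 0 := neg_eq_zero.1
    (IsLocalMax.hasDerivAt_eq_zero (Eventually.of_forall hmax') (h.hasDerivAt_snd t₀))
  have huT : u (t₀ + T) = 0 := (hpu t₀).trans hu₀
  have htT : t₀ < t₀ + T := lt_add_of_pos_right t₀ hT
  have hY₀ : 0 < Y t₀ := by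
    refine (hY t₀ hu₀).lt_or_gt.resolve_left fun hneg => ?_
    obtain ⟨r, -, -, -, hYr⟩ := h.exists_first_zero_of_neg hf hY htT hu₀ hneg huT
    exact (hmax' r).not_gt (hneg.trans hYr)
  obtain ⟨t₁, ht₁, hu₁, hpos, hY₁⟩ := h.exists_first_zero_of_pos hf hY htT hu₀ hY₀ huT
  have ht₁T : t₁ < t₀ + T := ht₁.2.lt_of_ne fun heq => by
    rw [heq, hpY] at hY₁
    exact hY₁.not_gt hY₀
  obtain ⟨t₂, ht₂, hu₂, hneg, -⟩ := h.exists_first_zero_of_neg hf hY ht₁T hu₁ hY₁ huT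
  exact ⟨t₀, t₁, t₂, ht₁.1, ht₂.1, hu₀, hu₁, hu₂, hpos, hneg, hmax' t₂⟩


theorem eq_zero_of_eq_zero (h : IsLienardSolution f u Y) {ρ : ℝ} (hρ : 0 < ρ)
    (hf : ∀ v, |v| < ρ → v * f v ≤ 0) {T : ℝ} (hT : 0 < T) (hpu : Periodic u T)
    (hpY : Periodic Y T) (hu₀ : u t₀ = 0) (hY₀ : Y t₀ = 0) (t : ℝ) : u t = 0 ∧ Y t = 0 := by
  set E : ℝ → ℝ := fun t => u t ^ 2 + Y t ^ 2
  have hE : ∀ t, HasDerivAt E (-2 * (u t * f (u t))) t := fun t =>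
    (((h.hasDerivAt_fst t).pow 2).add ((h.hasDerivAt_snd t).pow 2)).congr_deriv (by ring)
  have hE' : ∀ t, E t < ρ ^ 2 → 0 ≤ -2 * (u t * f (u t)) := fun t ht => by
    have hut : |u t| < ρ := abs_lt_of_sq_lt_sq (by nlinarith [sq_nonneg (Y t)]) hρ.le
    nlinarith [hf (u t) hut]
  have hpE : Periodic E T := fun t => by simp only [E, hpu t, hpY t]
  obtain ⟨t', ht', hEt⟩ := hpE.exists_mem_Ico hT t (t₀ - T)
  have hEt' : E t = 0 := hEt ▸ eq_zero_of_le_of_deriv_nonneg_near_zero (t₀ := t₀) hE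
    (fun t => by positivity) (by positivity) hE' (by simp [E, hu₀, hY₀]) t'
    (by linarith [ht'.2])
  obtain ⟨hu, hY⟩ := (add_eq_zero_iff_of_nonneg (sq_nonneg _) (sq_nonneg _)).1 hEt'
  exact ⟨pow_eq_zero_iff two_ne_zero |>.1 hu, pow_eq_zero_iff two_ne_zero |>.1 hY⟩

/-- `d(V²)/dY = 2 u u' / Y' = -2 (Y - f V)`. -/
theorem exists_right_branch (h : IsLienardSolution f u Y) (ht : t₀ < t₁)
    (hpos : ∀ t ∈ Ioo t₀ t₁, 0 < u t) (hu₀ : u t₀ = 0) (hu₁ : u t₁ = 0) :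
    ∃ V : ℝ → ℝ, Continuous V ∧ V (Y t₀) = 0 ∧ V (Y t₁) = 0 ∧
      ∀ η ∈ Ioo (Y t₁) (Y t₀), (∃ t ∈ Ioo t₀ t₁, V η = u t) ∧
        HasDerivAt (fun η => V η ^ 2) (-2 * (η - f (V η))) η := by
  have hanti := h.strictAntiOn_snd hpos
  obtain ⟨ψ, hψc, hψY, hYψ⟩ :=
    hanti.exists_continuous_inverse ht.le h.continuous_snd.continuousOn
  refine ⟨fun η => u (ψ η), h.continuous_fst.comp hψc,
    by simp [hψY t₀ (left_mem_Icc.2 ht.le), hu₀],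
    by simp [hψY t₁ (right_mem_Icc.2 ht.le), hu₁], fun η hη => ?_⟩
  obtain ⟨hψη, hYη⟩ := hYψ η (Ioo_subset_Icc_self hη)
  have hψη' : ψ η ∈ Ioo t₀ t₁ :=
    ⟨hψη.1.lt_of_ne (by rintro heq; rw [← heq] at hYη; exact hη.2.ne hYη.symm),
      hψη.2.lt_of_ne (by rintro heq; rw [heq] at hYη; exact hη.1.ne' hYη.symm)⟩
  refine ⟨⟨ψ η, hψη', rfl⟩, ?_⟩
  have hψ' : HasDerivAt ψ (-u (ψ η))⁻¹ η :=
    HasDerivAt.of_local_left_inverse hψc.continuousAt (h.hasDerivAt_snd (ψ η))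
      (neg_ne_zero.2 (hpos _ hψη').ne')
      (Filter.mem_of_superset (Icc_mem_nhds hη.1 hη.2) fun η' hη' => (hYψ η' hη').2)
  refine (((h.hasDerivAt_fst (ψ η)).comp η hψ').pow 2).congr_deriv ?_
  rw [Function.comp_apply, hYη]
  field_simp [(hpos _ hψη').ne']
  ring

theorem exists_left_branch (h : IsLienardSolution f u Y) (ht : t₀ < t₁)
    (hneg : ∀ t ∈ Ioo t₀ t₁, u t < 0) (hu₀ : u t₀ = 0) (hu₁ : u t₁ = 0) :
    ∃ V : ℝ → ℝ, Continuous V ∧ V (Y t₀) = 0 ∧ V (Y t₁) = 0 ∧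
      ∀ η ∈ Ioo (Y t₀) (Y t₁), (∃ t ∈ Ioo t₀ t₁, V η = -u t) ∧
        HasDerivAt (fun η => V η ^ 2) (-2 * (η - f (-V η))) η := by
  obtain ⟨V, hVc, hV₀, hV₁, hV⟩ := h.neg.exists_right_branch ht
    (fun t ht => neg_pos.2 (hneg t ht)) (by simp [hu₀]) (by simp [hu₁])
  refine ⟨fun η => V (-η), hVc.comp continuous_neg, by simpa using hV₀, by simpa using hV₁,
    fun η hη => ?_⟩
  obtain ⟨hval, hV'⟩ := hV (-η) ⟨neg_lt_neg hη.2, neg_lt_neg hη.1⟩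
  refine ⟨hval, ?_⟩
  refine (hV'.comp η (hasDerivAt_neg η)).congr_deriv ?_
  ring


theorem snd_lt_of_half_loops (h : IsLienardSolution f u Y) {s ρ : ℝ} (hρ : 0 < ρ)
    (hfle : ∀ v w, 0 ≤ v → v < s → 0 ≤ w → w ≤ max v ρ → f w ≤ f (-v))
    (hflt : ∀ v, 0 < v → v < s → f v < f (-v)) (hus : ∀ t, -s < u t)
    (h₀₁ : t₀ < t₁) (h₁₂ : t₁ < t₂) (hu₀ : u t₀ = 0) (hu₁ : u t₁ = 0) (hu₂ : u t₂ = 0)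
    (hpos : ∀ t ∈ Ioo t₀ t₁, 0 < u t) (hneg : ∀ t ∈ Ioo t₁ t₂, u t < 0) : Y t₀ < Y t₂ := by
  by_contra! hle
  obtain ⟨R, hRc, -, hR₁, hR⟩ := h.exists_right_branch h₀₁ hpos hu₀ hu₁
  obtain ⟨L, hLc, hL₁, hL₂, hL⟩ := h.exists_left_branch h₁₂ hneg hu₁ hu₂
  have hsub : Ioo (Y t₁) (Y t₂) ⊆ Ioo (Y t₁) (Y t₀) := Ioo_subset_Ioo_right hle
  have hlt := sq_lt_sq_of_branches hρ hfle hflt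
    (h.strictMonoOn_snd hneg (left_mem_Icc.2 h₁₂.le) (right_mem_Icc.2 h₁₂.le) h₁₂)
    hLc hRc hL₁ hR₁
    (fun η hη => by
      obtain ⟨t, ht, hLt⟩ := (hL η hη).1
      exact hLt ▸ ⟨neg_pos.2 (hneg t ht), by linarith [hus t]⟩)
    (fun η hη => by
      obtain ⟨t, ht, hRt⟩ := (hR η (hsub hη)).1
      exact hRt ▸ (hpos t ht).le)
    (fun η hη => (hL η hη).2) fun η hη => (hR η (hsub hη)).2
  rw [hL₂] at hlt
  exact (sq_nonneg _).not_gt (by simpa using hlt)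

end IsLienardSolution

/-- For `a > 1`, `δ > 0`, `b ≤ -4(a+1)²/3`, the smooth system `ẋ = y - δ(x³/3 + bx)`,
`ẏ = -(x - 1 - a)` has no nonconstant periodic solution with `x > 0`
(no small limit cycle). -/
theorem no_small_limit_cycle (a b δ : ℝ) (ha : 1 < a) (hδ : 0 < δ)
    (hb : b ≤ -4 * (a + 1) ^ 2 / 3)
    (x y : ℝ → ℝ) (hpos : ∀ t : ℝ, 0 < x t)
    (hx : ∀ t : ℝ, HasDerivAt x (y t - δ * ((x t) ^ 3 / 3 + b * x t)) t)
    (hy : ∀ t : ℝ, HasDerivAt y (-(x t - 1 - a)) t)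
    (T : ℝ) (hT : 0 < T)
    (hper : ∀ t : ℝ, x (t + T) = x t ∧ y (t + T) = y t) :
    ∃ cx cy : ℝ, ∀ t : ℝ, x t = cx ∧ y t = cy := by
  set s := a + 1
  set y₀ := δ * (s ^ 3 / 3 + b * s)
  set f : ℝ → ℝ := fun v => δ * dampingIncrement s b v
  have hs : 0 < s / 7 := by linarith
  have hsol : IsLienardSolution f (fun t => x t - s) (fun t => y t - y₀) :=
    ⟨fun t => ((hx t).sub_const s).congr_deriv (by simp only [f, dampingIncrement]; ring),
      fun t => ((hy t).sub_const y₀).congr_deriv (by ring)⟩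
  have hpu : Periodic (fun t => x t - s) T := fun t => by simp only [(hper t).1]
  have hpY : Periodic (fun t => y t - y₀) T := fun t => by simp only [(hper t).2]
  by_cases heq : ∃ t₀, x t₀ - s = 0 ∧ y t₀ - y₀ = 0
  · obtain ⟨t₀, hu₀, hY₀⟩ := heq
    have hf : ∀ v, |v| < s / 7 → v * f v ≤ 0 := fun v hv => by
      nlinarith [mul_dampingIncrement_nonpos hb hv.le]
    refine ⟨s, y₀, fun t => ?_⟩
    obtain ⟨hxt, hyt⟩ := hsol.eq_zero_of_eq_zero hs hf hT hpu hpY hu₀ hY₀ t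
    exact ⟨by linarith, by linarith⟩
  exfalso
  obtain ⟨t₀, t₁, t₂, h₀₁, h₁₂, hu₀, hu₁, hu₂, hright, hleft, hle⟩ :=
    hsol.exists_half_loops (by simp [f]) (fun t hu hY => heq ⟨t, hu, hY⟩) hT hpu hpY
  refine hle.not_gt (hsol.snd_lt_of_half_loops hs (s := s) (fun v w hv hvs hw hwv => ?_)
    (fun v hv hvs => ?_) (fun t => by linarith [hpos t]) h₀₁ h₁₂ hu₀ hu₁ hu₂ hright hleft)
  · exact mul_le_mul_of_nonneg_left
      (dampingIncrement_le_neg_of_le_max hb hv hvs hw hwv) hδ.le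
  · exact mul_lt_mul_of_pos_left (dampingIncrement_lt_neg hb hv hvs) hδ
end
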